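/- arXiv:2211.07780 — 11 statements merged into one kernel-verified Lean document; each statement's English description precedes it below -/
import Mathlib

section
/- Reduction via the trigonometric ansatz: let d1, d2, d3 be positive real constants with d1 > d3, set κ = 1/√(d1 − d3), and let α0, α1, α2 be real constants. Suppose φ1, φ2, φ3 : ℝ → ℝ are differentiable and solve the ODE system φ1' + φ1(φ2 − 1) = 0, φ2' − φ2φ3 + ((d2 − d3)/(d1 − d3))·φ2(φ2 − 1) − (α0(d1 − d2)/(d1 − d3))·φ1 = 0, φ3' + φ2φ3 + (α0(d1 − d2)/(d1 − d3))·φ1 = 0. Then the functions u(t,x) = φ1(t)·(α0 + α1·sin(κx)·exp(−d1κ²t) + α2·cos(κx)·exp(−d1κ²t)), v(t,x) = φ2(t) − u(t,x), w(t,x) = φ3(t) + ((d1 − d2)/(d1 − d3))·u(t,x) satisfy the HGF system (2-3*) at every point (t,x) ∈ ℝ × ℝ. -/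
/-!
The bracket `θ = α0 + (α1 sin κx + α2 cos κx) e^{-d1 κ² t}` solves `θ_t = d1 θ_xx` with
`θ_xx = -κ² (θ - α0)`, so `u = φ1 θ` satisfies `u_t - d1 u_xx = φ1' θ`; since `u + v = φ2`, the
equation for `u` is the first ODE. In the equations for `v = φ2 - u` and `w = φ3 + e u`, with
`e = (d1 - d2)/(d1 - d3)`, the mismatch of diffusion coefficients leaves the terms `(d1 - d2) u_xx`
and `e (d1 - d3) u_xx`, which `κ² (d1 - d3) = 1` turns into `± e (u - α0 φ1)`; the `α0`-terms of
the ODEs are exactly what absorbs them.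
-/

open Real

noncomputable def trigHeatMode (κ d α0 α1 α2 t x : ℝ) : ℝ :=
  α0 + (α1 * sin (κ * x) + α2 * cos (κ * x)) * exp (-d * κ ^ 2 * t)

theorem deriv_deriv_of_eq_const_add_mul {𝕜 𝕜' : Type*} [NontriviallyNormedField 𝕜]
    [NormedDivisionRing 𝕜'] [NormedAlgebra 𝕜 𝕜'] {f g : 𝕜 → 𝕜'} {c a : 𝕜'}
    (h : ∀ z, g z = c + a * f z) (x : 𝕜) :
    deriv (fun y => deriv g y) x = a * deriv (fun y => deriv f y) x := by
  obtain rfl : g = fun z => c + a * f z := funext h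
  rw [deriv_const_add', deriv_const_mul_field', deriv_const_mul_field']

section TrigHeatMode

variable (κ d α0 α1 α2 : ℝ)

theorem hasDerivAt_trigHeatMode_time (t x : ℝ) :
    HasDerivAt (fun s => trigHeatMode κ d α0 α1 α2 s x)
      (-d * κ ^ 2 * (trigHeatMode κ d α0 α1 α2 t x - α0)) t :=
  ((((hasDerivAt_id' t).const_mul (-d * κ ^ 2)).exp.const_mul
    (α1 * sin (κ * x) + α2 * cos (κ * x))).const_add α0).congr_deriv
      (by simp only [trigHeatMode]; ring)

theorem hasDerivAt_trigHeatMode_space (t y : ℝ) :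
    HasDerivAt (fun z => trigHeatMode κ d α0 α1 α2 t z)
      (κ * (α1 * cos (κ * y) - α2 * sin (κ * y)) * exp (-d * κ ^ 2 * t)) y :=
  have hs := ((hasDerivAt_id' y).const_mul κ).sin.const_mul α1
  have hc := ((hasDerivAt_id' y).const_mul κ).cos.const_mul α2
  (((hs.add hc).mul_const (exp (-d * κ ^ 2 * t))).const_add α0).congr_deriv (by ring)

theorem deriv_deriv_trigHeatMode_space (t x : ℝ) :
    deriv (fun y => deriv (fun z => trigHeatMode κ d α0 α1 α2 t z) y) x
      = -κ ^ 2 * (trigHeatMode κ d α0 α1 α2 t x - α0) := by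
  simp only [fun y => (hasDerivAt_trigHeatMode_space κ d α0 α1 α2 t y).deriv]
  have hc := ((hasDerivAt_id' x).const_mul κ).cos.const_mul α1
  have hs := ((hasDerivAt_id' x).const_mul κ).sin.const_mul α2
  exact (((hc.sub hs).const_mul κ).mul_const (exp (-d * κ ^ 2 * t))).deriv.trans
    (by simp only [trigHeatMode]; ring)

variable {κ d α0 α1 α2} {φ : ℝ → ℝ} {u : ℝ → ℝ → ℝ}
  (hu : ∀ s z, u s z = φ s * trigHeatMode κ d α0 α1 α2 s z)
include hu

theorem hasDerivAt_mul_trigHeatMode_time {t : ℝ} (hφ : DifferentiableAt ℝ φ t) (x : ℝ) :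
    HasDerivAt (fun s => u s x) (deriv φ t * trigHeatMode κ d α0 α1 α2 t x
      - d * κ ^ 2 * φ t * (trigHeatMode κ d α0 α1 α2 t x - α0)) t := by
  rw [funext fun s => hu s x]
  exact (hφ.hasDerivAt.mul (hasDerivAt_trigHeatMode_time κ d α0 α1 α2 t x)).congr_deriv
    (by ring)

theorem deriv_deriv_mul_trigHeatMode_space (t x : ℝ) :
    deriv (fun y => deriv (fun z => u t z) y) x
      = -κ ^ 2 * φ t * (trigHeatMode κ d α0 α1 α2 t x - α0) := by
  rw [deriv_deriv_of_eq_const_add_mul (c := 0) (fun z => by rw [hu, zero_add]),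
    deriv_deriv_trigHeatMode_space]
  ring

end TrigHeatMode

theorem hgf_reduction_trig_ansatz_general
    (d1 d2 d3 : ℝ) (hd13 : d3 < d1)
    (κ : ℝ) (hκ : κ = 1 / Real.sqrt (d1 - d3))
    (α0 α1 α2 : ℝ)
    (φ1 φ2 φ3 : ℝ → ℝ)
    (hφ1 : Differentiable ℝ φ1) (hφ2 : Differentiable ℝ φ2) (hφ3 : Differentiable ℝ φ3)
    (hode1 : ∀ t : ℝ, deriv φ1 t + φ1 t * (φ2 t - 1) = 0)
    (hode2 : ∀ t : ℝ, deriv φ2 t - φ2 t * φ3 t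
        + ((d2 - d3) / (d1 - d3)) * (φ2 t * (φ2 t - 1))
        - (α0 * (d1 - d2) / (d1 - d3)) * φ1 t = 0)
    (hode3 : ∀ t : ℝ, deriv φ3 t + φ2 t * φ3 t
        + (α0 * (d1 - d2) / (d1 - d3)) * φ1 t = 0)
    (u v w : ℝ → ℝ → ℝ)
    (hu : ∀ t x : ℝ, u t x = φ1 t * (α0 + α1 * Real.sin (κ * x) * Real.exp (-d1 * κ ^ 2 * t)
        + α2 * Real.cos (κ * x) * Real.exp (-d1 * κ ^ 2 * t)))
    (hv : ∀ t x : ℝ, v t x = φ2 t - u t x)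
    (hw : ∀ t x : ℝ, w t x = φ3 t + ((d1 - d2) / (d1 - d3)) * u t x) :
    ∀ t x : ℝ,
      deriv (fun s => u s x) t
        = d1 * deriv (fun y => deriv (fun z => u t z) y) x
          + u t x * (1 - u t x - v t x) ∧
      deriv (fun s => v s x) t
        = d2 * deriv (fun y => deriv (fun z => v t z) y) x
          + ((d2 - d3) / (d1 - d3)) * (v t x * (1 - u t x - v t x))
          + u t x * w t x + v t x * w t x ∧
      deriv (fun s => w s x) t
        = d3 * deriv (fun y => deriv (fun z => w t z) y) x
          - u t x * w t x - v t x * w t x := by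
  intro t x
  have huθ (s z : ℝ) : u s z = φ1 s * trigHeatMode κ d1 α0 α1 α2 s z := by
    rw [hu, trigHeatMode]; ring
  have hut := hasDerivAt_mul_trigHeatMode_time huθ (hφ1 t) x
  have huxx := deriv_deriv_mul_trigHeatMode_space huθ t x
  have hvt := (hφ2 t).hasDerivAt.fun_sub hut
  have hwt := (hφ3 t).hasDerivAt.fun_add (hut.const_mul ((d1 - d2) / (d1 - d3)))
  have hvxx := deriv_deriv_of_eq_const_add_mul (g := v t) (f := u t) (c := φ2 t) (a := -1)
    (fun z => by rw [hv]; ring) x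
  have hwxx := deriv_deriv_of_eq_const_add_mul (hw t) x
  set θ := trigHeatMode κ d1 α0 α1 α2 t x
  have hκ2 : κ ^ 2 = (d1 - d3)⁻¹ := by rw [hκ, one_div, inv_pow, sq_sqrt (sub_pos.2 hd13).le]
  have hinv : (d1 - d3) * (d1 - d3)⁻¹ = 1 := mul_inv_cancel₀ (sub_pos.2 hd13).ne'
  refine ⟨?_, ?_, ?_⟩
  · rw [hut.deriv, huxx, hv, huθ]
    linear_combination θ * hode1 t
  · rw [funext fun s => hv s x, hvt.deriv, hvxx, huxx, hw, hv, huθ, hκ2]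
    linear_combination hode2 t - θ * hode1 t - φ1 t * θ * (φ2 t - 1) * hinv
  · rw [funext fun s => hw s x, hwt.deriv, hwxx, huxx, hw, hv, huθ, hκ2]
    linear_combination hode3 t + (d1 - d2) / (d1 - d3) * θ * hode1 t
      - (d1 - d2) / (d1 - d3) * φ1 t * (θ - α0) * hinv

/-- Reduction via the trigonometric ansatz (d1 > d3) to the HGF system (2-3*). -/
theorem hgf_reduction_trig_ansatz
    (d1 d2 d3 : ℝ) (hd1 : 0 < d1) (hd2 : 0 < d2) (hd3 : 0 < d3) (hd13 : d3 < d1)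
    (κ : ℝ) (hκ : κ = 1 / Real.sqrt (d1 - d3))
    (α0 α1 α2 : ℝ)
    (φ1 φ2 φ3 : ℝ → ℝ)
    (hφ1 : Differentiable ℝ φ1) (hφ2 : Differentiable ℝ φ2) (hφ3 : Differentiable ℝ φ3)
    (hode1 : ∀ t : ℝ, deriv φ1 t + φ1 t * (φ2 t - 1) = 0)
    (hode2 : ∀ t : ℝ, deriv φ2 t - φ2 t * φ3 t
        + ((d2 - d3) / (d1 - d3)) * (φ2 t * (φ2 t - 1))
        - (α0 * (d1 - d2) / (d1 - d3)) * φ1 t = 0)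
    (hode3 : ∀ t : ℝ, deriv φ3 t + φ2 t * φ3 t
        + (α0 * (d1 - d2) / (d1 - d3)) * φ1 t = 0)
    (u v w : ℝ → ℝ → ℝ)
    (hu : ∀ t x : ℝ, u t x = φ1 t * (α0 + α1 * Real.sin (κ * x) * Real.exp (-d1 * κ ^ 2 * t)
        + α2 * Real.cos (κ * x) * Real.exp (-d1 * κ ^ 2 * t)))
    (hv : ∀ t x : ℝ, v t x = φ2 t - u t x)
    (hw : ∀ t x : ℝ, w t x = φ3 t + ((d1 - d2) / (d1 - d3)) * u t x) :
    ∀ t x : ℝ,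
      deriv (fun s => u s x) t
        = d1 * deriv (fun y => deriv (fun z => u t z) y) x
          + u t x * (1 - u t x - v t x) ∧
      deriv (fun s => v s x) t
        = d2 * deriv (fun y => deriv (fun z => v t z) y) x
          + ((d2 - d3) / (d1 - d3)) * (v t x * (1 - u t x - v t x))
          + u t x * w t x + v t x * w t x ∧
      deriv (fun s => w s x) t
        = d3 * deriv (fun y => deriv (fun z => w t z) y) x
          - u t x * w t x - v t x * w t x :=
  hgf_reduction_trig_ansatz_general d1 d2 d3 hd13 κ hκ α0 α1 α2 φ1 φ2 φ3 hφ1 hφ2 hφ3 hode1 hode2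
    hode3 u v w hu hv hw
end

section
/- Reduction via the exponential ansatz: let d1, d2, d3 be positive real constants with d1 < d3, set κ = 1/√(d3 − d1), and let α0, α1, α2 be real constants. Suppose φ1, φ2, φ3 : ℝ → ℝ are differentiable and solve the ODE system φ1' + φ1(φ2 − 1) = 0, φ2' − φ2φ3 + ((d2 − d3)/(d1 − d3))·φ2(φ2 − 1) − (α0(d1 − d2)/(d1 − d3))·φ1 = 0, φ3' + φ2φ3 + (α0(d1 − d2)/(d1 − d3))·φ1 = 0. Then the functions u(t,x) = φ1(t)·(α0 + α1·exp(κx + d1κ²t) + α2·exp(−κx + d1κ²t)), v(t,x) = φ2(t) − u(t,x), w(t,x) = φ3(t) + ((d1 − d2)/(d1 − d3))·u(t,x) satisfy the HGF system (2-3*) at every point (t,x) ∈ ℝ × ℝ. -/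
open Real

/-! The profile `P = α1 e^(κx + d1κ²t) + α2 e^(-κx + d1κ²t)` satisfies `P_t = d1κ² P` and
`P_xx = κ² P`, so with `u = φ1(t)(α0 + P)` every term of the system is a polynomial in the `φi`,
their derivatives and `P`. Since `u + v = φ2` depends on `t` alone, each equation reduces to the
ODEs for the `φi`, together with `κ²(d3 - d1) = 1`, which cancels the diffusion terms left over in
the equations for `v` and `w`. -/

noncomputable def expProfile (κ a α1 α2 t x : ℝ) : ℝ :=
  α1 * exp (κ * x + a * t) + α2 * exp (-(κ * x) + a * t)

section expProfile

variable (κ a α1 α2 : ℝ)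

theorem hasDerivAt_expProfile_time (t x : ℝ) :
    HasDerivAt (fun s => expProfile κ a α1 α2 s x) (a * expProfile κ a α1 α2 t x) t := by
  have hat := (hasDerivAt_id' t).const_mul a
  have h1 := (hat.const_add (κ * x)).exp
  have h2 := (hat.const_add (-(κ * x))).exp
  exact ((h1.const_mul α1).add (h2.const_mul α2)).congr_deriv (by unfold expProfile; ring)

theorem hasDerivAt_expProfile_space (t x : ℝ) :
    HasDerivAt (expProfile κ a α1 α2 t) (κ * expProfile κ a α1 (-α2) t x) x := by
  have hκx := (hasDerivAt_id' x).const_mul κ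
  have h1 := (hκx.add_const (a * t)).exp
  have h2 := (hκx.fun_neg.add_const (a * t)).exp
  exact ((h1.const_mul α1).add (h2.const_mul α2)).congr_deriv (by unfold expProfile; ring)

theorem deriv_deriv_expProfile_space (t x : ℝ) :
    deriv (deriv (expProfile κ a α1 α2 t)) x = κ ^ 2 * expProfile κ a α1 α2 t x := by
  have h : deriv (expProfile κ a α1 α2 t) = fun y => κ * expProfile κ a α1 (-α2) t y :=
    funext fun y => (hasDerivAt_expProfile_space κ a α1 α2 t y).deriv
  rw [h, ((hasDerivAt_expProfile_space κ a α1 (-α2) t x).const_mul κ).deriv, neg_neg, sq,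
    mul_assoc]

theorem hasDerivAt_mul_expProfile_time {φ : ℝ → ℝ} {t : ℝ} (hφ : DifferentiableAt ℝ φ t)
    (α0 x : ℝ) :
    HasDerivAt (fun s => φ s * (α0 + expProfile κ a α1 α2 s x))
      (deriv φ t * (α0 + expProfile κ a α1 α2 t x) + φ t * (a * expProfile κ a α1 α2 t x)) t :=
  hφ.hasDerivAt.mul ((hasDerivAt_expProfile_time κ a α1 α2 t x).const_add α0)

end expProfile

theorem hgf_reduction_exp_ansatz_general
    (d1 d2 d3 : ℝ) (hd13 : d1 < d3)
    (κ : ℝ) (hκ : κ = 1 / Real.sqrt (d3 - d1))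
    (α0 α1 α2 : ℝ)
    (φ1 φ2 φ3 : ℝ → ℝ)
    (hφ1 : Differentiable ℝ φ1) (hφ2 : Differentiable ℝ φ2) (hφ3 : Differentiable ℝ φ3)
    (hode1 : ∀ t : ℝ, deriv φ1 t + φ1 t * (φ2 t - 1) = 0)
    (hode2 : ∀ t : ℝ, deriv φ2 t - φ2 t * φ3 t
        + ((d2 - d3) / (d1 - d3)) * (φ2 t * (φ2 t - 1))
        - (α0 * (d1 - d2) / (d1 - d3)) * φ1 t = 0)
    (hode3 : ∀ t : ℝ, deriv φ3 t + φ2 t * φ3 t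
        + (α0 * (d1 - d2) / (d1 - d3)) * φ1 t = 0)
    (u v w : ℝ → ℝ → ℝ)
    (hu : ∀ t x : ℝ, u t x = φ1 t * (α0 + α1 * Real.exp (κ * x + d1 * κ ^ 2 * t)
        + α2 * Real.exp (-(κ * x) + d1 * κ ^ 2 * t)))
    (hv : ∀ t x : ℝ, v t x = φ2 t - u t x)
    (hw : ∀ t x : ℝ, w t x = φ3 t + ((d1 - d2) / (d1 - d3)) * u t x) :
    ∀ t x : ℝ,
      deriv (fun s => u s x) t
        = d1 * deriv (fun y => deriv (fun z => u t z) y) x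
          + u t x * (1 - u t x - v t x) ∧
      deriv (fun s => v s x) t
        = d2 * deriv (fun y => deriv (fun z => v t z) y) x
          + ((d2 - d3) / (d1 - d3)) * (v t x * (1 - u t x - v t x))
          + u t x * w t x + v t x * w t x ∧
      deriv (fun s => w s x) t
        = d3 * deriv (fun y => deriv (fun z => w t z) y) x
          - u t x * w t x - v t x * w t x := by
  obtain rfl : u = fun t x => φ1 t * (α0 + expProfile κ (d1 * κ ^ 2) α1 α2 t x) := by
    funext t x; rw [hu, expProfile]; ring
  obtain rfl := funext fun t => funext (hv t)
  obtain rfl := funext fun t => funext (hw t)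
  set c := (d1 - d2) / (d1 - d3)
  set k := (d2 - d3) / (d1 - d3)
  have hκ2 : κ ^ 2 * (d3 - d1) = 1 := by
    rw [hκ, div_pow, one_pow, Real.sq_sqrt (sub_nonneg.2 hd13.le)]
    exact one_div_mul_cancel (sub_pos.2 hd13).ne'
  have hne : d1 - d3 ≠ 0 := sub_ne_zero.2 hd13.ne
  have hk : k = 1 - c := by simp only [k, c]; field_simp; ring
  have hc : c = (d2 - d1) * κ ^ 2 := by
    simp only [c]; field_simp; linear_combination (d2 - d1) * hκ2
  intro t x
  set E := expProfile κ (d1 * κ ^ 2) α1 α2 t x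
  have hut := hasDerivAt_mul_expProfile_time κ (d1 * κ ^ 2) α1 α2 (hφ1 t) α0 x
  simp only [deriv_const_sub, deriv_const_add', deriv.fun_neg',
    deriv_deriv_expProfile_space, deriv_fun_sub (hφ2 t) hut.differentiableAt,
    deriv_fun_add (hφ3 t) (hut.differentiableAt.const_mul c), deriv_const_mul_field, hut.deriv]
  refine ⟨?_, ?_, ?_⟩
  · linear_combination (α0 + E) * hode1 t
  · linear_combination hode2 t - (α0 + E) * hode1 t + φ1 t * (α0 + E) * (1 - φ2 t) * hk
      - φ1 t * E * hc
  · linear_combination hode3 t + c * (α0 + E) * hode1 t - c * φ1 t * E * hκ2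

/-- Reduction via the exponential ansatz (d1 < d3) to the HGF system (2-3*). -/
theorem hgf_reduction_exp_ansatz
    (d1 d2 d3 : ℝ) (hd1 : 0 < d1) (hd2 : 0 < d2) (hd3 : 0 < d3) (hd13 : d1 < d3)
    (κ : ℝ) (hκ : κ = 1 / Real.sqrt (d3 - d1))
    (α0 α1 α2 : ℝ)
    (φ1 φ2 φ3 : ℝ → ℝ)
    (hφ1 : Differentiable ℝ φ1) (hφ2 : Differentiable ℝ φ2) (hφ3 : Differentiable ℝ φ3)
    (hode1 : ∀ t : ℝ, deriv φ1 t + φ1 t * (φ2 t - 1) = 0)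
    (hode2 : ∀ t : ℝ, deriv φ2 t - φ2 t * φ3 t
        + ((d2 - d3) / (d1 - d3)) * (φ2 t * (φ2 t - 1))
        - (α0 * (d1 - d2) / (d1 - d3)) * φ1 t = 0)
    (hode3 : ∀ t : ℝ, deriv φ3 t + φ2 t * φ3 t
        + (α0 * (d1 - d2) / (d1 - d3)) * φ1 t = 0)
    (u v w : ℝ → ℝ → ℝ)
    (hu : ∀ t x : ℝ, u t x = φ1 t * (α0 + α1 * Real.exp (κ * x + d1 * κ ^ 2 * t)
        + α2 * Real.exp (-(κ * x) + d1 * κ ^ 2 * t)))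
    (hv : ∀ t x : ℝ, v t x = φ2 t - u t x)
    (hw : ∀ t x : ℝ, w t x = φ3 t + ((d1 - d2) / (d1 - d3)) * u t x) :
    ∀ t x : ℝ,
      deriv (fun s => u s x) t
        = d1 * deriv (fun y => deriv (fun z => u t z) y) x
          + u t x * (1 - u t x - v t x) ∧
      deriv (fun s => v s x) t
        = d2 * deriv (fun y => deriv (fun z => v t z) y) x
          + ((d2 - d3) / (d1 - d3)) * (v t x * (1 - u t x - v t x))
          + u t x * w t x + v t x * w t x ∧
      deriv (fun s => w s x) t
        = d3 * deriv (fun y => deriv (fun z => w t z) y) x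
          - u t x * w t x - v t x * w t x :=
  hgf_reduction_exp_ansatz_general d1 d2 d3 hd13 κ hκ α0 α1 α2 φ1 φ2 φ3 hφ1 hφ2 hφ3 hode1 hode2
    hode3 u v w hu hv hw
end

section
/- The four-parameter family of exact solutions (3-2*): let d1, d2, d3 be positive real constants with d1 > d3, set κ = 1/√(d1 − d3), and let u0, α0, α1, α2 be real constants. Then the functions u(t,x) = u0·(α0 + α1·sin(κx)·exp(−d1κ²t) + α2·cos(κx)·exp(−d1κ²t)), v(t,x) = 1 − u0·(α0 + α1·sin(κx)·exp(−d1κ²t) + α2·cos(κx)·exp(−d1κ²t)), w(t,x) = u0·((d1 − d2)/(d1 − d3))·(α1·sin(κx)·exp(−d1κ²t) + α2·cos(κx)·exp(−d1κ²t)) satisfy the HGF system (2-3*) at every point (t,x) ∈ ℝ × ℝ. -/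
/-!
Since `v = 1 - u`, every reaction factor `1 - u - v` vanishes and `u w + v w = w`. What remains is
linear: `u - u0 α0`, `v - 1 + u0 α0` and `w` are multiples of the heat mode
`φ = (α1 sin κx + α2 cos κx) e^{-d1 κ² t}`, which satisfies `φ_t = -d1 κ² φ` and `φ_xx = -κ² φ`.
The `v`- and `w`-equations then reduce to `(d1 - d3) κ² = 1`, which is the choice of `κ`.
-/

open Real

noncomputable section

def heatMode (d κ a b t x : ℝ) : ℝ :=
  (a * sin (κ * x) + b * cos (κ * x)) * exp (-d * κ ^ 2 * t)

variable (d κ a b : ℝ)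

theorem hasDerivAt_heatMode_time (t x : ℝ) :
    HasDerivAt (fun s => heatMode d κ a b s x) (-d * κ ^ 2 * heatMode d κ a b t x) t := by
  have hlin : HasDerivAt (fun s : ℝ => -d * κ ^ 2 * s) (-d * κ ^ 2) t :=
    ((hasDerivAt_id' t).const_mul _).congr_deriv (mul_one _)
  unfold heatMode
  exact (hlin.exp.const_mul (a * sin (κ * x) + b * cos (κ * x))).congr_deriv (by ring)

theorem hasDerivAt_heatMode_space (t x : ℝ) :
    HasDerivAt (fun z => heatMode d κ a b t z) (κ * heatMode d κ (-b) a t x) x := by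
  have hlin : HasDerivAt (fun z : ℝ => κ * z) κ x :=
    ((hasDerivAt_id' x).const_mul _).congr_deriv (mul_one _)
  unfold heatMode
  exact (((hlin.sin.const_mul a).add (hlin.cos.const_mul b)).mul_const
    (exp (-d * κ ^ 2 * t))).congr_deriv (by ring)

variable {d κ a b}

theorem deriv_time_of_eq_affine_heatMode {f : ℝ → ℝ → ℝ} {A B : ℝ}
    (hf : ∀ t x, f t x = A + B * heatMode d κ a b t x) (t x : ℝ) :
    deriv (fun s => f s x) t = B * (-d * κ ^ 2 * heatMode d κ a b t x) := by
  simp only [hf]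
  exact (((hasDerivAt_heatMode_time d κ a b t x).const_mul B).const_add A).deriv

theorem deriv_deriv_space_of_eq_affine_heatMode {f : ℝ → ℝ → ℝ} {A B : ℝ}
    (hf : ∀ t x, f t x = A + B * heatMode d κ a b t x) (t x : ℝ) :
    deriv (fun y => deriv (fun z => f t z) y) x = B * (-κ ^ 2 * heatMode d κ a b t x) := by
  have hfirst : (fun y => deriv (fun z => f t z) y) = fun y => B * (κ * heatMode d κ (-b) a t y) :=
    funext fun y => by
      simp only [hf]
      exact (((hasDerivAt_heatMode_space d κ a b t y).const_mul B).const_add A).deriv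
  rw [hfirst, (((hasDerivAt_heatMode_space d κ (-b) a t x).const_mul κ).const_mul B).deriv]
  unfold heatMode
  ring

end

theorem hgf_exact_solution_3_2_star_general
    (d1 d2 d3 : ℝ) (hd13 : d3 < d1)
    (κ : ℝ) (hκ : κ = 1 / Real.sqrt (d1 - d3))
    (u0 α0 α1 α2 : ℝ)
    (u v w : ℝ → ℝ → ℝ)
    (hu : ∀ t x : ℝ, u t x = u0 * (α0 + α1 * Real.sin (κ * x) * Real.exp (-d1 * κ ^ 2 * t)
        + α2 * Real.cos (κ * x) * Real.exp (-d1 * κ ^ 2 * t)))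
    (hv : ∀ t x : ℝ, v t x = 1 - u0 * (α0 + α1 * Real.sin (κ * x) * Real.exp (-d1 * κ ^ 2 * t)
        + α2 * Real.cos (κ * x) * Real.exp (-d1 * κ ^ 2 * t)))
    (hw : ∀ t x : ℝ, w t x = u0 * ((d1 - d2) / (d1 - d3))
        * (α1 * Real.sin (κ * x) * Real.exp (-d1 * κ ^ 2 * t)
          + α2 * Real.cos (κ * x) * Real.exp (-d1 * κ ^ 2 * t))) :
    ∀ t x : ℝ,
      deriv (fun s => u s x) t
        = d1 * deriv (fun y => deriv (fun z => u t z) y) x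
          + u t x * (1 - u t x - v t x) ∧
      deriv (fun s => v s x) t
        = d2 * deriv (fun y => deriv (fun z => v t z) y) x
          + ((d2 - d3) / (d1 - d3)) * (v t x * (1 - u t x - v t x))
          + u t x * w t x + v t x * w t x ∧
      deriv (fun s => w s x) t
        = d3 * deriv (fun y => deriv (fun z => w t z) y) x
          - u t x * w t x - v t x * w t x := by
  have hκ2 : (d1 - d3) * κ ^ 2 = 1 := by
    rw [hκ, div_pow, one_pow, sq_sqrt (sub_pos.2 hd13).le]
    exact mul_one_div_cancel (sub_pos.2 hd13).ne'
  have hu' : ∀ t x, u t x = u0 * α0 + u0 * heatMode d1 κ α1 α2 t x := fun t x => by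
    rw [hu, heatMode]; ring
  have hv' : ∀ t x, v t x = (1 - u0 * α0) + -u0 * heatMode d1 κ α1 α2 t x := fun t x => by
    rw [hv, heatMode]; ring
  have hw' : ∀ t x, w t x = 0 + u0 * ((d1 - d2) / (d1 - d3)) * heatMode d1 κ α1 α2 t x :=
    fun t x => by rw [hw, heatMode]; ring
  have hratio : (d1 - d2) / (d1 - d3) = (d1 - d2) * κ ^ 2 := by
    rw [div_eq_iff (sub_pos.2 hd13).ne', mul_assoc, mul_comm (κ ^ 2), hκ2, mul_one]
  intro t x
  have hsum : u t x + v t x = 1 := by rw [hu', hv']; ring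
  rw [deriv_time_of_eq_affine_heatMode hu', deriv_time_of_eq_affine_heatMode hv',
    deriv_time_of_eq_affine_heatMode hw', deriv_deriv_space_of_eq_affine_heatMode hu',
    deriv_deriv_space_of_eq_affine_heatMode hv', deriv_deriv_space_of_eq_affine_heatMode hw']
  have hwx := hw' t x
  set φ := heatMode d1 κ α1 α2 t x
  refine ⟨?_, ?_, ?_⟩
  · linear_combination u t x * hsum
  · rw [hratio] at hwx
    linear_combination ((d2 - d3) / (d1 - d3) * v t x - w t x) * hsum - hwx
  · linear_combination w t x * hsum + hwx - u0 * ((d1 - d2) / (d1 - d3)) * φ * hκ2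

/-- The four-parameter family of exact solutions (3-2*) of the HGF system (2-3*). -/
theorem hgf_exact_solution_3_2_star
    (d1 d2 d3 : ℝ) (hd1 : 0 < d1) (hd2 : 0 < d2) (hd3 : 0 < d3) (hd13 : d3 < d1)
    (κ : ℝ) (hκ : κ = 1 / Real.sqrt (d1 - d3))
    (u0 α0 α1 α2 : ℝ)
    (u v w : ℝ → ℝ → ℝ)
    (hu : ∀ t x : ℝ, u t x = u0 * (α0 + α1 * Real.sin (κ * x) * Real.exp (-d1 * κ ^ 2 * t)
        + α2 * Real.cos (κ * x) * Real.exp (-d1 * κ ^ 2 * t)))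
    (hv : ∀ t x : ℝ, v t x = 1 - u0 * (α0 + α1 * Real.sin (κ * x) * Real.exp (-d1 * κ ^ 2 * t)
        + α2 * Real.cos (κ * x) * Real.exp (-d1 * κ ^ 2 * t)))
    (hw : ∀ t x : ℝ, w t x = u0 * ((d1 - d2) / (d1 - d3))
        * (α1 * Real.sin (κ * x) * Real.exp (-d1 * κ ^ 2 * t)
          + α2 * Real.cos (κ * x) * Real.exp (-d1 * κ ^ 2 * t))) :
    ∀ t x : ℝ,
      deriv (fun s => u s x) t
        = d1 * deriv (fun y => deriv (fun z => u t z) y) x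
          + u t x * (1 - u t x - v t x) ∧
      deriv (fun s => v s x) t
        = d2 * deriv (fun y => deriv (fun z => v t z) y) x
          + ((d2 - d3) / (d1 - d3)) * (v t x * (1 - u t x - v t x))
          + u t x * w t x + v t x * w t x ∧
      deriv (fun s => w s x) t
        = d3 * deriv (fun y => deriv (fun z => w t z) y) x
          - u t x * w t x - v t x * w t x :=
  hgf_exact_solution_3_2_star_general d1 d2 d3 hd13 κ hκ u0 α0 α1 α2 u v w hu hv hw
end

section
/- Exact solution (3-9) of the reduced ODE system (3-4): let d1, d2, d3 be real constants with d1 ≠ d3, let α0, β, C be real constants with β ≠ 0, and suppose 1 + β·C·(e^t − 1) ≠ 0 for all t in an open interval I. Then the functions φ1(t) = C·e^t/(1 + β·C·(e^t − 1)), φ2(t) = β·C·e^t/(1 + β·C·(e^t − 1)), φ3(t) = (d1 − d2)·(β − α0 + β·C·(α0 − β − α0·e^t))/(β·(d1 − d3)·(1 + β·C·(e^t − 1))) satisfy, for all t ∈ I, the ODE system φ1' + φ1(φ2 − 1) = 0, φ2' − φ2φ3 + ((d2 − d3)/(d1 − d3))·φ2(φ2 − 1) − (α0(d1 − d2)/(d1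 − d3))·φ1 = 0, φ3' + φ2φ3 + (α0(d1 − d2)/(d1 − d3))·φ1 = 0. -/
/-!
`φ2` is the logistic curve with `φ2 0 = β C`, so `φ2' = φ2 (1 - φ2)`. Moreover `φ1 = φ2 / β` and,
wherever the denominator is nonzero, `φ3 = k (1 - α0 / β - φ2)` with `k = (d1 - d2) / (d1 - d3)`.
Substituting, each equation becomes a multiple of `φ2 (1 - φ2)` with vanishing coefficient, the
second one because `k + (d2 - d3) / (d1 - d3) = 1`.
-/

open Real Filter Topology

noncomputable def logisticCurve (c t : ℝ) : ℝ := c * exp t / (1 + c * (exp t - 1))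

theorem hasDerivAt_logisticCurve {c t : ℝ} (h : 1 + c * (exp t - 1) ≠ 0) :
    HasDerivAt (logisticCurve c) (logisticCurve c t * (1 - logisticCurve c t)) t := by
  have hnum : HasDerivAt (fun s => c * exp s) (c * exp t) t := (hasDerivAt_exp t).const_mul c
  have hden : HasDerivAt (fun s => 1 + c * (exp s - 1)) (c * exp t) t := by
    simpa using (((hasDerivAt_exp t).sub_const 1).const_mul c).const_add 1
  refine (hnum.div hden h).congr_deriv ?_
  unfold logisticCurve
  field_simp

theorem hgf_reduced_ode_exact_solution_3_9_general
    (d1 d2 d3 : ℝ) (hd13 : d1 ≠ d3)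
    (α0 β C : ℝ) (hβ : β ≠ 0)
    (I : Set ℝ)
    (hden : ∀ t ∈ I, 1 + β * C * (Real.exp t - 1) ≠ 0)
    (φ1 φ2 φ3 : ℝ → ℝ)
    (hφ1 : ∀ t : ℝ, φ1 t = C * Real.exp t / (1 + β * C * (Real.exp t - 1)))
    (hφ2 : ∀ t : ℝ, φ2 t = β * C * Real.exp t / (1 + β * C * (Real.exp t - 1)))
    (hφ3 : ∀ t : ℝ, φ3 t = (d1 - d2) * (β - α0 + β * C * (α0 - β - α0 * Real.exp t))
        / (β * (d1 - d3) * (1 + β * C * (Real.exp t - 1)))) :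
    ∀ t ∈ I,
      deriv φ1 t + φ1 t * (φ2 t - 1) = 0 ∧
      deriv φ2 t - φ2 t * φ3 t
        + ((d2 - d3) / (d1 - d3)) * (φ2 t * (φ2 t - 1))
        - (α0 * (d1 - d2) / (d1 - d3)) * φ1 t = 0 ∧
      deriv φ3 t + φ2 t * φ3 t + (α0 * (d1 - d2) / (d1 - d3)) * φ1 t = 0 := by
  intro t ht
  have hd : d1 - d3 ≠ 0 := sub_ne_zero.mpr hd13
  set k := (d1 - d2) / (d1 - d3) with hk
  have hψ : φ2 = logisticCurve (β * C) := funext hφ2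
  have hφ1_eq : φ1 = fun s => φ2 s / β := by
    ext s
    rw [hφ1, hφ2]
    field_simp
  have hφ3_eq : φ3 =ᶠ[𝓝 t] fun s => k * (1 - α0 / β - φ2 s) := by
    have hcont : Continuous fun s => 1 + β * C * (exp s - 1) := by fun_prop
    filter_upwards [hcont.continuousAt.eventually_ne (hden t ht)] with s hs
    rw [hφ3, hφ2, hk]
    field_simp
    ring
  have hφ2' : HasDerivAt φ2 (φ2 t * (1 - φ2 t)) t := hψ ▸ hasDerivAt_logisticCurve (hden t ht)
  have hφ1' : deriv φ1 t = φ2 t * (1 - φ2 t) / β := by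
    rw [hφ1_eq]
    exact (hφ2'.div_const β).deriv
  have hφ3' : deriv φ3 t = k * -(φ2 t * (1 - φ2 t)) := by
    rw [hφ3_eq.deriv_eq]
    exact ((hφ2'.const_sub _).const_mul k).deriv
  have hm : (d2 - d3) / (d1 - d3) = 1 - k := by
    rw [hk]
    field_simp
    ring
  have hα : α0 * (d1 - d2) / (d1 - d3) = α0 * k := by rw [hk, mul_div_assoc]
  rw [hφ1', hφ2'.deriv, hφ3', hφ3_eq.eq_of_nhds, hφ1_eq, hm, hα]
  refine ⟨?_, ?_, ?_⟩ <;> field_simp <;> ring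

/-- Exact solution (3-9) of the reduced ODE system (3-4). -/
theorem hgf_reduced_ode_exact_solution_3_9
    (d1 d2 d3 : ℝ) (hd13 : d1 ≠ d3)
    (α0 β C : ℝ) (hβ : β ≠ 0)
    (a b : ℝ) (I : Set ℝ) (hI : I = Set.Ioo a b)
    (hden : ∀ t ∈ I, 1 + β * C * (Real.exp t - 1) ≠ 0)
    (φ1 φ2 φ3 : ℝ → ℝ)
    (hφ1 : ∀ t : ℝ, φ1 t = C * Real.exp t / (1 + β * C * (Real.exp t - 1)))
    (hφ2 : ∀ t : ℝ, φ2 t = β * C * Real.exp t / (1 + β * C * (Real.exp t - 1)))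
    (hφ3 : ∀ t : ℝ, φ3 t = (d1 - d2) * (β - α0 + β * C * (α0 - β - α0 * Real.exp t))
        / (β * (d1 - d3) * (1 + β * C * (Real.exp t - 1)))) :
    ∀ t ∈ I,
      deriv φ1 t + φ1 t * (φ2 t - 1) = 0 ∧
      deriv φ2 t - φ2 t * φ3 t
        + ((d2 - d3) / (d1 - d3)) * (φ2 t * (φ2 t - 1))
        - (α0 * (d1 - d2) / (d1 - d3)) * φ1 t = 0 ∧
      deriv φ3 t + φ2 t * φ3 t + (α0 * (d1 - d2) / (d1 - d3)) * φ1 t = 0 :=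
  hgf_reduced_ode_exact_solution_3_9_general d1 d2 d3 hd13 α0 β C hβ I hden φ1 φ2 φ3 hφ1 hφ2 hφ3
end

section
/- Reduction of the ODE system (3-4) to the second-order ODE (3-7): let d1, d2, d3, α0, C be real constants with d1 ≠ d3, and let φ1 : I → ℝ be a twice differentiable nonvanishing function on an open interval I satisfying φ1'' − ((d1 + d2 − 2d3)/(d1 − d3))·(φ1')²/φ1 + (α0(d1 − d2)/(d1 − d3) − C·e^{−t})·φ1·φ1' + ((d2 − d3)/(d1 − d3))·φ1' + C·e^{−t}·φ1² = 0 on I. Define φ2(t) = 1 − φ1'(t)/φ1(t) and φ3(t) = (C·e^{−t} − α0(d1 − d2)/(d1 − d3))·φ1(t). Then (φ1, φ2, φ3) satisfies the ODE system φ1' + φ1(φ2 − 1) = 0, φ2' − φ2φ3 + ((d2 − d3)/(d1 − d3))·φ2(φ2 − 1) − (α0(d1 − d2)/(d1 − d3))·φ1 = 0, φ3' + φ2φ3 + (α0(d1 − d2)/(d1 − d3))·φ1 = 0 on I. -/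
/-- Reduction of the ODE system (3-4) to the second-order ODE (3-7). -/
theorem hgf_ode_system_3_4_reduction_to_3_7
    (d1 d2 d3 α0 C : ℝ) (hd13 : d1 ≠ d3)
    (a b : ℝ) (I : Set ℝ) (hI : I = Set.Ioo a b)
    (φ1 : ℝ → ℝ)
    (hφ1diff : ∀ t ∈ I, DifferentiableAt ℝ φ1 t)
    (hφ1diff2 : ∀ t ∈ I, DifferentiableAt ℝ (deriv φ1) t)
    (hφ1ne : ∀ t ∈ I, φ1 t ≠ 0)
    (hODE : ∀ t ∈ I,
      deriv (deriv φ1) t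
        - ((d1 + d2 - 2 * d3) / (d1 - d3)) * (deriv φ1 t) ^ 2 / φ1 t
        + (α0 * (d1 - d2) / (d1 - d3) - C * Real.exp (-t)) * φ1 t * deriv φ1 t
        + ((d2 - d3) / (d1 - d3)) * deriv φ1 t
        + C * Real.exp (-t) * (φ1 t) ^ 2 = 0)
    (φ2 φ3 : ℝ → ℝ)
    (hφ2 : ∀ t : ℝ, φ2 t = 1 - deriv φ1 t / φ1 t)
    (hφ3 : ∀ t : ℝ, φ3 t = (C * Real.exp (-t) - α0 * (d1 - d2) / (d1 - d3)) * φ1 t) :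
    ∀ t ∈ I,
      deriv φ1 t + φ1 t * (φ2 t - 1) = 0 ∧
      deriv φ2 t - φ2 t * φ3 t
        + ((d2 - d3) / (d1 - d3)) * (φ2 t * (φ2 t - 1))
        - (α0 * (d1 - d2) / (d1 - d3)) * φ1 t = 0 ∧
      deriv φ3 t + φ2 t * φ3 t + (α0 * (d1 - d2) / (d1 - d3)) * φ1 t = 0 := by
  intro t ht
  have h1 := hφ1diff t ht
  have h2 := hφ1diff2 t ht
  have hne := hφ1ne t ht
  have hd13' : d1 - d3 ≠ 0 := sub_ne_zero.mpr hd13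
  have hd : HasDerivAt φ1 (deriv φ1 t) t := h1.hasDerivAt
  have hdd : HasDerivAt (deriv φ1) (deriv (deriv φ1) t) t := h2.hasDerivAt
  have hφ2fun : φ2 = fun s => 1 - deriv φ1 s / φ1 s := funext hφ2
  have hφ3fun : φ3 = fun s => (C * Real.exp (-s) - α0 * (d1 - d2) / (d1 - d3)) * φ1 s :=
    funext hφ3
  have hdiv : HasDerivAt (fun s => deriv φ1 s / φ1 s)
      ((deriv (deriv φ1) t * φ1 t - deriv φ1 t * deriv φ1 t) / (φ1 t) ^ 2) t := hdd.div hd hne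
  have hφ2d : HasDerivAt φ2
      (0 - (deriv (deriv φ1) t * φ1 t - deriv φ1 t * deriv φ1 t) / (φ1 t) ^ 2) t := by
    rw [hφ2fun]
    exact (hasDerivAt_const t (1 : ℝ)).sub hdiv
  have hexp : HasDerivAt (fun s : ℝ => Real.exp (-s)) (Real.exp (-t) * (-1)) t :=
    (Real.hasDerivAt_exp (-t)).comp t (hasDerivAt_neg t)
  have hcoef : HasDerivAt (fun s : ℝ => C * Real.exp (-s) - α0 * (d1 - d2) / (d1 - d3))
      (C * (Real.exp (-t) * (-1))) t := by
    simpa using (hexp.const_mul C).sub_const (α0 * (d1 - d2) / (d1 - d3))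
  have hφ3d : HasDerivAt φ3
      (C * (Real.exp (-t) * (-1)) * φ1 t
        + (C * Real.exp (-t) - α0 * (d1 - d2) / (d1 - d3)) * deriv φ1 t) t := by
    rw [hφ3fun]
    exact hcoef.mul hd
  have hODEt := hODE t ht
  refine ⟨?_, ?_, ?_⟩
  · rw [hφ2 t]
    field_simp
    ring
  · have key : deriv φ2 t - φ2 t * φ3 t
        + ((d2 - d3) / (d1 - d3)) * (φ2 t * (φ2 t - 1))
        - (α0 * (d1 - d2) / (d1 - d3)) * φ1 t
        = -(deriv (deriv φ1) t
          - ((d1 + d2 - 2 * d3) / (d1 - d3)) * (deriv φ1 t) ^ 2 / φ1 t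
          + (α0 * (d1 - d2) / (d1 - d3) - C * Real.exp (-t)) * φ1 t * deriv φ1 t
          + ((d2 - d3) / (d1 - d3)) * deriv φ1 t
          + C * Real.exp (-t) * (φ1 t) ^ 2) / φ1 t := by
      rw [hφ2d.deriv, hφ2 t, hφ3 t]
      field_simp
      ring
    rw [key, hODEt, neg_zero, zero_div]
  · rw [hφ3d.deriv, hφ2 t, hφ3 t]
    field_simp
    ring
end

section
/- Exact solution (3-15): let d1 > d2 > 0, set d3 = (d1 + d2)/2 and κ = √(2/(d1 − d2)), let α0 ≠ 0, α1, α2, C1 be real constants with 4·α0·C1 < 1, and set μ = √(1 − 4·α0·C1). Define, for t > 0 and x ∈ ℝ: u(t,x) = (1/(2α0) + (μ/(2α0))·tanh(μt/2))·(α0 + α1·sin(κx)·exp(−d1κ²t) + α2·cos(κx)·exp(−d1κ²t)), v(t,x) = 1 − (1 − 4α0C1)/(2·cosh²(μt/2)·(1 + μ·tanh(μt/2))) − u(t,x), w(t,x) = (exp(−d1κ²t)/α0)·(1 + μ·tanh(μt/2))·(α1·sin(κx) + α2·cos(κx)). Then (u, v, w) satisfies the HGF system (2-3*) (with d3 = (d1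 + d2)/2) at every point (t,x) with t > 0. -/
/-!
The profile `P t = 1 + μ tanh (μ t / 2)` solves the Riccati equation
`P' = (μ² - (P - 1)²) / 2`. With `r = (μ² - (P - 1)²) / (2 P) = P' / P` and
`S x = α₁ sin κx + α₂ cos κx`, the solution reads
`w = (e^{-d₁κ²t} / α₀) P S`, `u = (P + w) / 2`, `1 - u - v = r`. Since `S'' = -κ² S` and
`w_t = (r - d₁κ²) w`, the three equations reduce to `κ² (d₁ - d₂) = 2` and to
`r' = r (1 - P - r)`, a consequence of the Riccati equation.
-/

open Real

namespace Real

theorem one_sub_tanh_sq (x : ℝ) : 1 - tanh x ^ 2 = 1 / cosh x ^ 2 := by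
  have hc := (cosh_pos x).ne'
  rw [tanh_eq_sinh_div_cosh]
  field_simp
  linarith [cosh_sq x]

theorem hasDerivAt_tanh (x : ℝ) : HasDerivAt tanh (1 - tanh x ^ 2) x := by
  have h := (hasDerivAt_sinh x).div (hasDerivAt_cosh x) (cosh_pos x).ne'
  rw [show sinh / cosh = tanh from funext fun y => (tanh_eq_sinh_div_cosh y).symm] at h
  refine h.congr_deriv ?_
  rw [one_sub_tanh_sq, ← cosh_sq_sub_sinh_sq x]
  ring

theorem tanh_nonneg {x : ℝ} (hx : 0 ≤ x) : 0 ≤ tanh x := by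
  rw [tanh_eq_sinh_div_cosh]
  exact div_nonneg (sinh_nonneg_iff.mpr hx) (cosh_pos x).le

end Real

theorem hasDerivAt_trig_mode (κ α₁ α₂ y : ℝ) :
    HasDerivAt (fun z => α₁ * sin (κ * z) + α₂ * cos (κ * z))
      (-(κ * α₂) * sin (κ * y) + κ * α₁ * cos (κ * y)) y := by
  have hlin : HasDerivAt (fun z => κ * z) κ y :=
    ((hasDerivAt_id' y).const_mul κ).congr_deriv (mul_one κ)
  exact ((hlin.sin.const_mul α₁).add (hlin.cos.const_mul α₂)).congr_deriv (by ring)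

theorem deriv_deriv_trig_mode (κ α₁ α₂ x : ℝ) :
    deriv (deriv fun z => α₁ * sin (κ * z) + α₂ * cos (κ * z)) x
      = -κ ^ 2 * (α₁ * sin (κ * x) + α₂ * cos (κ * x)) := by
  rw [funext fun y => (hasDerivAt_trig_mode κ α₁ α₂ y).deriv,
    (hasDerivAt_trig_mode κ _ _ x).deriv]
  ring

theorem deriv_deriv_of_eq_const_add_mul_s10 {S f : ℝ → ℝ} {k x : ℝ}
    (hS : deriv (deriv S) x = k * S x) (a b : ℝ) (hf : ∀ z, f z = a + b * S z) :
    deriv (fun y => deriv f y) x = k * (f x - a) := by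
  simp only [funext hf, deriv_const_add', deriv_const_mul_field']
  rw [hS]
  ring

/-- The reaction term `1 - u - v` of the solution, as a function of the value `p` of the profile. -/
noncomputable def hgfRate (μ p : ℝ) : ℝ := (μ ^ 2 - (p - 1) ^ 2) / (2 * p)

section Riccati

variable {μ : ℝ} {P : ℝ → ℝ} {t : ℝ}

theorem hasDerivAt_hgfRate (hP : HasDerivAt P ((μ ^ 2 - (P t - 1) ^ 2) / 2) t) (hPt : P t ≠ 0) :
    HasDerivAt (fun s => hgfRate μ (P s)) (hgfRate μ (P t) * (1 - P t - hgfRate μ (P t))) t := by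
  have hnum : HasDerivAt (fun s => μ ^ 2 - (P s - 1) ^ 2)
      (-(2 * (P t - 1) * ((μ ^ 2 - (P t - 1) ^ 2) / 2))) t := by
    simpa using ((hP.sub_const 1).pow 2).const_sub (μ ^ 2)
  refine (hnum.div (hP.const_mul 2) (by positivity)).congr_deriv ?_
  simp only [hgfRate]
  field_simp
  ring

theorem hgf_solution_of_riccati {d₁ d₂ d₃ κ c : ℝ} (hκ : κ ^ 2 * (d₁ - d₂) = 2)
    (hd₃ : d₃ = (d₁ + d₂) / 2) (hP : HasDerivAt P ((μ ^ 2 - (P t - 1) ^ 2) / 2) t)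
    (hPt : P t ≠ 0) {S : ℝ → ℝ} {x : ℝ} (hS : deriv (deriv S) x = -κ ^ 2 * S x)
    {u v w : ℝ → ℝ → ℝ} (hw : ∀ s z, w s z = c * exp (-d₁ * κ ^ 2 * s) * P s * S z)
    (hu : ∀ s z, u s z = (P s + w s z) / 2) (hv : ∀ s z, v s z = 1 - hgfRate μ (P s) - u s z) :
    deriv (fun s => u s x) t
        = d₁ * deriv (fun y => deriv (fun z => u t z) y) x + u t x * (1 - u t x - v t x) ∧
      deriv (fun s => v s x) t
        = d₂ * deriv (fun y => deriv (fun z => v t z) y) x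
          + ((d₂ - d₃) / (d₁ - d₃)) * (v t x * (1 - u t x - v t x))
          + u t x * w t x + v t x * w t x ∧
      deriv (fun s => w s x) t
        = d₃ * deriv (fun y => deriv (fun z => w t z) y) x - u t x * w t x - v t x * w t x := by
  set r := hgfRate μ (P t) with hr
  have hPr : HasDerivAt P (r * P t) t := by
    refine hP.congr_deriv ?_
    rw [hr, hgfRate]
    field_simp
  have hE : HasDerivAt (fun s => exp (-d₁ * κ ^ 2 * s))
      (exp (-d₁ * κ ^ 2 * t) * (-d₁ * κ ^ 2)) t :=
    ((hasDerivAt_id' t).const_mul (-d₁ * κ ^ 2)).exp.congr_deriv (by ring)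
  have hwt : HasDerivAt (fun s => w s x) ((r - d₁ * κ ^ 2) * w t x) t := by
    rw [funext fun s => hw s x]
    refine (((hE.const_mul c).mul hPr).mul_const (S x)).congr_deriv ?_
    rw [hw]
    ring
  have hut : HasDerivAt (fun s => u s x) ((r * P t + (r - d₁ * κ ^ 2) * w t x) / 2) t := by
    rw [funext fun s => hu s x]
    exact (hPr.add hwt).div_const 2
  have hvt : HasDerivAt (fun s => v s x)
      (-(r * (1 - P t - r)) - (r * P t + (r - d₁ * κ ^ 2) * w t x) / 2) t := by
    rw [funext fun s => hv s x]
    exact ((hasDerivAt_hgfRate hP hPt).const_sub 1).sub hut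
  set g := c * exp (-d₁ * κ ^ 2 * t) * P t with hg
  have hwxx : deriv (fun y => deriv (fun z => w t z) y) x = -κ ^ 2 * w t x := by
    rw [deriv_deriv_of_eq_const_add_mul_s10 hS 0 g (fun z => by rw [hw, hg, zero_add]), sub_zero]
  have huxx : deriv (fun y => deriv (fun z => u t z) y) x = -κ ^ 2 * (w t x / 2) := by
    rw [deriv_deriv_of_eq_const_add_mul_s10 hS (P t / 2) (g / 2)
      (fun z => by rw [hu, hw, hg]; ring), hu]
    ring
  have hvxx : deriv (fun y => deriv (fun z => v t z) y) x = κ ^ 2 * (w t x / 2) := by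
    rw [deriv_deriv_of_eq_const_add_mul_s10 hS (1 - r - P t / 2) (-g / 2)
      (fun z => by rw [hv, hu, hw, hg]; ring), hv, hu]
    ring
  have hratio : (d₂ - d₃) / (d₁ - d₃) = -1 := by
    rw [hd₃, div_eq_iff fun h => by nlinarith]
    ring
  rw [hut.deriv, hvt.deriv, hwt.deriv, huxx, hvxx, hwxx, hratio, hv t x, hu t x, ← hr]
  refine ⟨by ring, by linear_combination (w t x / 2) * hκ, ?_⟩
  rw [hd₃]
  linear_combination (-(w t x) / 2) * hκ

end Riccati

theorem hasDerivAt_tanh_profile (μ t : ℝ) :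
    HasDerivAt (fun s => 1 + μ * tanh (μ * s / 2))
      ((μ ^ 2 - (1 + μ * tanh (μ * t / 2) - 1) ^ 2) / 2) t := by
  have hlin : HasDerivAt (fun s => μ * s / 2) (μ / 2) t :=
    (((hasDerivAt_id' t).const_mul μ).div_const 2).congr_deriv (by rw [mul_one])
  refine (((hasDerivAt_tanh _).comp t hlin).const_mul μ |>.const_add 1).congr_deriv ?_
  ring

theorem hgf_exact_solution_3_15_general
    (d1 d2 : ℝ) (hd12 : d2 < d1)
    (d3 : ℝ) (hd3 : d3 = (d1 + d2) / 2)
    (κ : ℝ) (hκ : κ = Real.sqrt (2 / (d1 - d2)))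
    (α0 α1 α2 C1 : ℝ) (hα0 : α0 ≠ 0) (hC1 : 4 * α0 * C1 < 1)
    (μ : ℝ) (hμ : μ = Real.sqrt (1 - 4 * α0 * C1))
    (u v w : ℝ → ℝ → ℝ)
    (hu : ∀ t x : ℝ, u t x = (1 / (2 * α0) + (μ / (2 * α0)) * Real.tanh (μ * t / 2))
        * (α0 + α1 * Real.sin (κ * x) * Real.exp (-d1 * κ ^ 2 * t)
          + α2 * Real.cos (κ * x) * Real.exp (-d1 * κ ^ 2 * t)))
    (hv : ∀ t x : ℝ, v t x = 1 - (1 - 4 * α0 * C1)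
        / (2 * (Real.cosh (μ * t / 2)) ^ 2 * (1 + μ * Real.tanh (μ * t / 2))) - u t x)
    (hw : ∀ t x : ℝ, w t x = (Real.exp (-d1 * κ ^ 2 * t) / α0)
        * (1 + μ * Real.tanh (μ * t / 2))
        * (α1 * Real.sin (κ * x) + α2 * Real.cos (κ * x))) :
    ∀ t x : ℝ, 0 < t →
      deriv (fun s => u s x) t
        = d1 * deriv (fun y => deriv (fun z => u t z) y) x
          + u t x * (1 - u t x - v t x) ∧
      deriv (fun s => v s x) t
        = d2 * deriv (fun y => deriv (fun z => v t z) y) x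
          + ((d2 - d3) / (d1 - d3)) * (v t x * (1 - u t x - v t x))
          + u t x * w t x + v t x * w t x ∧
      deriv (fun s => w s x) t
        = d3 * deriv (fun y => deriv (fun z => w t z) y) x
          - u t x * w t x - v t x * w t x := by
  intro t x ht
  have hμ0 : 0 ≤ μ := hμ ▸ sqrt_nonneg _
  have hμ2 : 1 - 4 * α0 * C1 = μ ^ 2 := by rw [hμ, sq_sqrt (by linarith)]
  have hκ2 : κ ^ 2 * (d1 - d2) = 2 := by
    rw [hκ, sq_sqrt (div_pos two_pos (sub_pos.mpr hd12)).le]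
    field_simp [(sub_pos.mpr hd12).ne']
  have hPt : 0 < 1 + μ * tanh (μ * t / 2) := by
    have := tanh_nonneg (x := μ * t / 2) (by positivity)
    positivity
  refine hgf_solution_of_riccati (c := 1 / α0) hκ2 hd3 (hasDerivAt_tanh_profile μ t) hPt.ne'
    (deriv_deriv_trig_mode κ α1 α2 x) (fun s z => by rw [hw]; ring)
    (fun s z => by rw [hu, hw]; field_simp; ring) (fun s z => ?_)
  have hrate : μ ^ 2 - (1 + μ * tanh (μ * s / 2) - 1) ^ 2 = μ ^ 2 / cosh (μ * s / 2) ^ 2 := by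
    rw [div_eq_mul_one_div (μ ^ 2), ← one_sub_tanh_sq]
    ring
  rw [hv, hgfRate, hrate, hμ2, div_div]
  ring

/-- Exact solution (3-15) of the HGF system (2-3*) with d3 = (d1 + d2)/2. -/
theorem hgf_exact_solution_3_15
    (d1 d2 : ℝ) (hd2 : 0 < d2) (hd12 : d2 < d1)
    (d3 : ℝ) (hd3 : d3 = (d1 + d2) / 2)
    (κ : ℝ) (hκ : κ = Real.sqrt (2 / (d1 - d2)))
    (α0 α1 α2 C1 : ℝ) (hα0 : α0 ≠ 0) (hC1 : 4 * α0 * C1 < 1)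
    (μ : ℝ) (hμ : μ = Real.sqrt (1 - 4 * α0 * C1))
    (u v w : ℝ → ℝ → ℝ)
    (hu : ∀ t x : ℝ, u t x = (1 / (2 * α0) + (μ / (2 * α0)) * Real.tanh (μ * t / 2))
        * (α0 + α1 * Real.sin (κ * x) * Real.exp (-d1 * κ ^ 2 * t)
          + α2 * Real.cos (κ * x) * Real.exp (-d1 * κ ^ 2 * t)))
    (hv : ∀ t x : ℝ, v t x = 1 - (1 - 4 * α0 * C1)
        / (2 * (Real.cosh (μ * t / 2)) ^ 2 * (1 + μ * Real.tanh (μ * t / 2))) - u t x)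
    (hw : ∀ t x : ℝ, w t x = (Real.exp (-d1 * κ ^ 2 * t) / α0)
        * (1 + μ * Real.tanh (μ * t / 2))
        * (α1 * Real.sin (κ * x) + α2 * Real.cos (κ * x))) :
    ∀ t x : ℝ, 0 < t →
      deriv (fun s => u s x) t
        = d1 * deriv (fun y => deriv (fun z => u t z) y) x
          + u t x * (1 - u t x - v t x) ∧
      deriv (fun s => v s x) t
        = d2 * deriv (fun y => deriv (fun z => v t z) y) x
          + ((d2 - d3) / (d1 - d3)) * (v t x * (1 - u t x - v t x))
          + u t x * w t x + v t x * w t x ∧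
      deriv (fun s => w s x) t
        = d3 * deriv (fun y => deriv (fun z => w t z) y) x
          - u t x * w t x - v t x * w t x :=
  hgf_exact_solution_3_15_general d1 d2 hd12 d3 hd3 κ hκ α0 α1 α2 C1 hα0 hC1 μ hμ u v w hu hv hw
end

section
/- Nonnegativity of solution (3-18): let d1 > d2 > 0, κ = √(2/(d1 − d2)), and let β1, β2 be real constants with 1 > β1 > β2 > 0; set μ = √(1 − β1). Define u(t,x) = (1/2 + (μ/2)·tanh(μt/2))·(1 + β2·sin(κx)·exp(−d1κ²t)), v(t,x) = 1 − (1 − β1)/(2·cosh²(μt/2)·(1 + μ·tanh(μt/2))) − u(t,x), w(t,x) = β2·sin(κx)·exp(−d1κ²t)·(1 + μ·tanh(μt/2)). Then for every integer k, u(t,x) ≥ 0, v(t,x) ≥ 0 and w(t,x) ≥ 0 for all t > 0 and all x ∈ (2kπ/κ, (2k+1)π/κ). -/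
open Real

/-!
On `Ω_κ` we have `sin (κ x) > 0`, so `u` and `w` are products of positive factors. For `v`,
the identity `cosh⁻² = 1 - tanh²` gives `v = (β1 - s (1 + μ T)²) / (2 (1 + μ T))` with
`T = tanh (μ t / 2)` and `s = β2 sin (κ x) exp (-d1 κ² t)`. Since `1 + tanh y ≤ exp (2 y)`, the
factor `(1 + μ T)²` grows at most like `exp (2 t)`, while `d1 κ² = 2 d1 / (d1 - d2) ≥ 2` makes
`exp (-d1 κ² t)` decay at least like `exp (-2 t)`; hence `s (1 + μ T)² ≤ β2 < β1`.
-/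

lemma tanh_nonneg_of_nonneg {y : ℝ} (hy : 0 ≤ y) : 0 ≤ tanh y := by
  rw [tanh_eq_sinh_div_cosh]
  exact div_nonneg (sinh_nonneg_iff.mpr hy) (cosh_pos y).le

lemma one_add_tanh_le_exp_two_mul {y : ℝ} (hy : 0 ≤ y) : 1 + tanh y ≤ exp (2 * y) := by
  have hc := cosh_pos y
  have h1 : 1 + tanh y = exp y / cosh y := by
    rw [tanh_eq_sinh_div_cosh, ← cosh_add_sinh]; field_simp
  rw [h1, div_le_iff₀ hc, two_mul, exp_add]
  have := one_le_exp hy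
  have := one_le_cosh y
  nlinarith [exp_pos y]

lemma exp_mul_mul_one_add_mul_tanh_sq_le_one {c μ t : ℝ} (hc : c ≤ -2) (hμ0 : 0 ≤ μ)
    (hμ1 : μ ≤ 1) (ht : 0 ≤ t) : exp (c * t) * (1 + μ * tanh (μ * t / 2)) ^ 2 ≤ 1 := by
  have hT := tanh_nonneg_of_nonneg (by positivity : 0 ≤ μ * t / 2)
  have hgrowth : 1 + μ * tanh (μ * t / 2) ≤ exp t :=
    calc 1 + μ * tanh (μ * t / 2) ≤ 1 + tanh (μ * t / 2) := by
          gcongr; exact mul_le_of_le_one_left hT hμ1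
      _ ≤ exp (2 * (μ * t / 2)) := one_add_tanh_le_exp_two_mul (by positivity)
      _ ≤ exp t := exp_le_exp.mpr (by nlinarith)
  calc exp (c * t) * (1 + μ * tanh (μ * t / 2)) ^ 2 ≤ exp (-2 * t) * exp t ^ 2 := by
        gcongr
    _ = 1 := by rw [← exp_nat_mul, ← exp_add]; norm_num

lemma sin_pos_of_mem_Ioo {κ x : ℝ} (k : ℤ) (hκ : 0 < κ)
    (hx : x ∈ Set.Ioo (2 * k * π / κ) ((2 * k + 1) * π / κ)) : 0 < sin (κ * x) := by
  rw [Set.mem_Ioo, div_lt_iff₀' hκ, lt_div_iff₀' hκ] at hx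
  rw [← sin_sub_int_mul_two_pi (κ * x) k]
  apply sin_pos_of_pos_of_lt_pi <;> linarith

lemma one_sub_div_cosh_sq_sub_mul_eq_div {μ y s : ℝ} (h : 1 + μ * tanh y ≠ 0) :
    1 - μ ^ 2 / (2 * cosh y ^ 2 * (1 + μ * tanh y)) - (1 / 2 + μ / 2 * tanh y) * (1 + s)
      = (1 - μ ^ 2 - s * (1 + μ * tanh y) ^ 2) / (2 * (1 + μ * tanh y)) := by
  have hc : cosh y ≠ 0 := (cosh_pos y).ne'
  have hpyth : cosh y ^ 2 * (1 - tanh y ^ 2) = 1 := by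
    rw [tanh_eq_sinh_div_cosh]; field_simp; linear_combination cosh_sq_sub_sinh_sq y
  generalize tanh y = T at h hpyth ⊢
  field_simp
  linear_combination μ ^ 2 * hpyth

/-- Nonnegativity of solution (3-18) in the domain Ω_κ. -/
theorem hgf_solution_3_18_nonneg
    (d1 d2 : ℝ) (hd2 : 0 < d2) (hd12 : d2 < d1)
    (κ : ℝ) (hκ : κ = Real.sqrt (2 / (d1 - d2)))
    (β1 β2 : ℝ) (hβ1 : β1 < 1) (hβ12 : β2 < β1) (hβ2 : 0 < β2)
    (μ : ℝ) (hμ : μ = Real.sqrt (1 - β1))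
    (u v w : ℝ → ℝ → ℝ)
    (hu : ∀ t x : ℝ, u t x = (1 / 2 + (μ / 2) * Real.tanh (μ * t / 2))
        * (1 + β2 * Real.sin (κ * x) * Real.exp (-d1 * κ ^ 2 * t)))
    (hv : ∀ t x : ℝ, v t x = 1 - (1 - β1)
        / (2 * (Real.cosh (μ * t / 2)) ^ 2 * (1 + μ * Real.tanh (μ * t / 2))) - u t x)
    (hw : ∀ t x : ℝ, w t x = β2 * Real.sin (κ * x) * Real.exp (-d1 * κ ^ 2 * t)
        * (1 + μ * Real.tanh (μ * t / 2))) :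
    ∀ k : ℤ, ∀ t x : ℝ, 0 < t →
      x ∈ Set.Ioo ((2 * (k : ℝ) * π) / κ) ((2 * (k : ℝ) + 1) * π / κ) →
      u t x ≥ 0 ∧ v t x ≥ 0 ∧ w t x ≥ 0 := by
  intro k t x ht hx
  have hd : 0 < d1 - d2 := sub_pos.mpr hd12
  have hμ0 : 0 ≤ μ := hμ ▸ sqrt_nonneg _
  have hμ1 : μ ≤ 1 := hμ ▸ sqrt_le_one.mpr (by linarith)
  have hμsq : μ ^ 2 = 1 - β1 := hμ ▸ sq_sqrt (by linarith)
  have hκsq : κ ^ 2 = 2 / (d1 - d2) := hκ ▸ sq_sqrt (by positivity)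
  have hdecay : -d1 * κ ^ 2 ≤ -2 := by
    rw [hκsq, neg_mul, neg_le_neg_iff, ← mul_div_assoc, le_div_iff₀ hd]
    linarith
  have hsin := sin_pos_of_mem_Ioo k (hκ ▸ sqrt_pos.mpr (by positivity)) hx
  have hT := tanh_nonneg_of_nonneg (by positivity : 0 ≤ μ * t / 2)
  have hgrowth : 0 < 1 + μ * tanh (μ * t / 2) := by positivity
  have hdom := exp_mul_mul_one_add_mul_tanh_sq_le_one hdecay hμ0 hμ1 ht.le
  refine ⟨by rw [hu]; positivity, ?_, by rw [hw]; positivity⟩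
  rw [hv, hu, ← hμsq, one_sub_div_cosh_sq_sub_mul_eq_div hgrowth.ne']
  refine div_nonneg ?_ (by positivity)
  have hsmall : β2 * sin (κ * x) * exp (-d1 * κ ^ 2 * t) * (1 + μ * tanh (μ * t / 2)) ^ 2 ≤ β2 :=
    calc _ = β2 * sin (κ * x) * (exp (-d1 * κ ^ 2 * t) * (1 + μ * tanh (μ * t / 2)) ^ 2) := by
          ring
      _ ≤ β2 * 1 * 1 := by gcongr; exact sin_le_one _
      _ = β2 := by ring
  linarith
end

section
/- Heat-equation reduction (3-22*): let d3, a1, a3, a4 be real constants, let f : ℝ × ℝ → ℝ be a smooth solution of the linear diffusion (heat) equation f_t = f_xx, and suppose φ1, φ2, φ3 : ℝ → ℝ are differentiable and solve the ODE system φ1' = φ1(1 − φ2), φ2' = φ2(1 − φ2 + a1·φ3), φ3' = φ3(a3 − a4·φ2 − a3·φ3). Then the functions u(t,x) = φ1(t)·f(t,x), v(t,x) = φ2(t) − φ1(t)·f(t,x), w(t,x) = φ3(t) satisfy the HGF system (3-21) at every point (t,x) ∈ ℝ × ℝ. -/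
/-- Heat-equation reduction (3-22*) to the HGF system (3-21). -/
theorem hgf_heat_equation_reduction_3_22_star
    (d3 a1 a3 a4 : ℝ)
    (f : ℝ → ℝ → ℝ)
    (hf : ContDiff ℝ (⊤ : ℕ∞) (Function.uncurry f))
    (hheat : ∀ t x : ℝ, deriv (fun s => f s x) t = deriv (fun y => deriv (fun z => f t z) y) x)
    (φ1 φ2 φ3 : ℝ → ℝ)
    (hφ1 : Differentiable ℝ φ1) (hφ2 : Differentiable ℝ φ2) (hφ3 : Differentiable ℝ φ3)
    (hode1 : ∀ t : ℝ, deriv φ1 t = φ1 t * (1 - φ2 t))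
    (hode2 : ∀ t : ℝ, deriv φ2 t = φ2 t * (1 - φ2 t + a1 * φ3 t))
    (hode3 : ∀ t : ℝ, deriv φ3 t = φ3 t * (a3 - a4 * φ2 t - a3 * φ3 t))
    (u v w : ℝ → ℝ → ℝ)
    (hu : ∀ t x : ℝ, u t x = φ1 t * f t x)
    (hv : ∀ t x : ℝ, v t x = φ2 t - φ1 t * f t x)
    (hw : ∀ t x : ℝ, w t x = φ3 t) :
    ∀ t x : ℝ,
      deriv (fun s => u s x) t
        = deriv (fun y => deriv (fun z => u t z) y) x
          + u t x * (1 - u t x - v t x) ∧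
      deriv (fun s => v s x) t
        = deriv (fun y => deriv (fun z => v t z) y) x
          + v t x * (1 - u t x - v t x) + a1 * (u t x + v t x) * w t x ∧
      deriv (fun s => w s x) t
        = d3 * deriv (fun y => deriv (fun z => w t z) y) x
          + a3 * (w t x * (1 - w t x)) - a4 * (u t x + v t x) * w t x := by
  -- differentiability of time sections
  have hfd := hf.differentiable (by simp)
  have hft : ∀ x : ℝ, Differentiable ℝ (fun s => f s x) := by
    intro x
    have : (fun s => f s x) = (Function.uncurry f) ∘ (fun s => (s, x)) := rfl
    rw [this]
    exact hfd.comp (differentiable_id.prodMk (differentiable_const x))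
  intro t x
  -- abbreviations
  set ft : ℝ := deriv (fun s => f s x) t with hftdef
  set fxx : ℝ := deriv (fun y => deriv (fun z => f t z) y) x with hfxxdef
  -- time derivatives via HasDerivAt
  have hfdt : HasDerivAt (fun s => f s x) ft t := ((hft x) t).hasDerivAt
  have h1 : HasDerivAt φ1 (deriv φ1 t) t := (hφ1 t).hasDerivAt
  have h2 : HasDerivAt φ2 (deriv φ2 t) t := (hφ2 t).hasDerivAt
  have h3 : HasDerivAt φ3 (deriv φ3 t) t := (hφ3 t).hasDerivAt
  -- u_t
  have hut : deriv (fun s => u s x) t = deriv φ1 t * f t x + φ1 t * ft := by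
    have : HasDerivAt (fun s => φ1 s * f s x)
        (deriv φ1 t * f t x + φ1 t * ft) t := h1.mul hfdt
    have h := this.deriv
    simp only [hu]
    exact h
  -- v_t
  have hvt : deriv (fun s => v s x) t
      = deriv φ2 t - (deriv φ1 t * f t x + φ1 t * ft) := by
    have : HasDerivAt (fun s => φ2 s - φ1 s * f s x)
        (deriv φ2 t - (deriv φ1 t * f t x + φ1 t * ft)) t := h2.sub (h1.mul hfdt)
    have h := this.deriv
    simp only [hv]
    exact h
  -- w_t
  have hwt : deriv (fun s => w s x) t = deriv φ3 t := by
    simp only [hw]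
  -- spatial second derivatives
  have huxx : deriv (fun y => deriv (fun z => u t z) y) x = φ1 t * fxx := by
    simp only [hu]
    have : (fun y => deriv (fun z => φ1 t * f t z) y)
        = fun y => φ1 t * deriv (fun z => f t z) y := by
      funext y; exact deriv_const_mul_field _
    rw [this, deriv_const_mul_field]
  have hvxx : deriv (fun y => deriv (fun z => v t z) y) x = -(φ1 t * fxx) := by
    simp only [hv]
    have : (fun y => deriv (fun z => φ2 t - φ1 t * f t z) y)
        = fun y => -(φ1 t * deriv (fun z => f t z) y) := by
      funext y
      rw [deriv_const_sub, deriv_const_mul_field]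
    rw [this, deriv.fun_neg, deriv_const_mul_field]
  have hwxx : deriv (fun y => deriv (fun z => w t z) y) x = 0 := by
    simp only [hw]
    simp
  have hheat' : ft = fxx := hheat t x
  refine ⟨?_, ?_, ?_⟩
  · rw [hut, huxx, hu, hv, hode1, hheat']; ring
  · rw [hvt, hvxx, hu, hv, hw, hode1, hode2, hheat']; ring
  · rw [hwt, hwxx, hu, hv, hw, hode3]; ring
end

section
/- Exact solution family (3-30): let d3, a1 > 0, a4 > 0, C1, C2 be real constants, let f : ℝ × ℝ → ℝ be a smooth solution of the heat equation f_t = f_xx, and suppose 1 + C1·(e^t − 1) > 0 for all t in an open interval I. Define, for t ∈ I and x ∈ ℝ: u(t,x) = C2·e^t·(1 + C1(e^t − 1))^{−(1+a1)/(1+a1·a4)}·f(t,x), v(t,x) = ((1 + a1)/(1 + a1·a4))·C1·e^t/(1 + C1(e^t − 1)) − u(t,x), w(t,x) = ((1 − a4)/(1 + a1·a4))·C1·e^t/(1 + C1(e^t − 1)). Then (u, v, w) satisfies the HGF system (3-21) with a3 = 1 at every point (t,x) ∈ I × ℝ. -/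
/-- Exact solution family (3-30) of the HGF system (3-21) with a3 = 1. -/
theorem hgf_exact_solution_family_3_30
    (d3 a1 a4 C1 C2 : ℝ) (ha1 : 0 < a1) (ha4 : 0 < a4)
    (f : ℝ → ℝ → ℝ)
    (hf : ContDiff ℝ (⊤ : ℕ∞) (Function.uncurry f))
    (hheat : ∀ t x : ℝ, deriv (fun s => f s x) t = deriv (fun y => deriv (fun z => f t z) y) x)
    (a b : ℝ) (I : Set ℝ) (hI : I = Set.Ioo a b)
    (hden : ∀ t ∈ I, 0 < 1 + C1 * (Real.exp t - 1))
    (u v w : ℝ → ℝ → ℝ)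
    (hu : ∀ t x : ℝ, u t x = C2 * Real.exp t
        * (1 + C1 * (Real.exp t - 1)) ^ (-(1 + a1) / (1 + a1 * a4)) * f t x)
    (hv : ∀ t x : ℝ, v t x = ((1 + a1) / (1 + a1 * a4))
        * (C1 * Real.exp t / (1 + C1 * (Real.exp t - 1))) - u t x)
    (hw : ∀ t x : ℝ, w t x = ((1 - a4) / (1 + a1 * a4))
        * (C1 * Real.exp t / (1 + C1 * (Real.exp t - 1)))) :
    ∀ t ∈ I, ∀ x : ℝ,
      deriv (fun s => u s x) t
        = deriv (fun y => deriv (fun z => u t z) y) x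
          + u t x * (1 - u t x - v t x) ∧
      deriv (fun s => v s x) t
        = deriv (fun y => deriv (fun z => v t z) y) x
          + v t x * (1 - u t x - v t x) + a1 * (u t x + v t x) * w t x ∧
      deriv (fun s => w s x) t
        = d3 * deriv (fun y => deriv (fun z => w t z) y) x
          + 1 * (w t x * (1 - w t x)) - a4 * (u t x + v t x) * w t x := by
  intro t ht x
  have hg : 0 < 1 + C1 * (Real.exp t - 1) := hden t ht
  have h14 : (0:ℝ) < 1 + a1 * a4 := by positivity
  set r : ℝ := -(1 + a1) / (1 + a1 * a4) with hr
  -- basic derivative facts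
  have hgd : HasDerivAt (fun s => 1 + C1 * (Real.exp s - 1)) (C1 * Real.exp t) t :=
    (((Real.hasDerivAt_exp t).sub_const 1).const_mul C1).const_add 1
  have hgr : HasDerivAt (fun s => (1 + C1 * (Real.exp s - 1)) ^ r)
      (C1 * Real.exp t * r * (1 + C1 * (Real.exp t - 1)) ^ (r - 1)) t :=
    hgd.rpow_const (Or.inl hg.ne')
  have hDf : Differentiable ℝ (Function.uncurry f) := hf.differentiable (by simp)
  have hft : HasDerivAt (fun s => f s x) (deriv (fun s => f s x) t) t := by
    have hds : Differentiable ℝ (fun s => f s x) :=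
      hDf.comp (differentiable_id.prodMk (differentiable_const x))
    exact (hds t).hasDerivAt
  have h1 : HasDerivAt (fun s => C2 * Real.exp s) (C2 * Real.exp t) t :=
    (Real.hasDerivAt_exp t).const_mul C2
  have hP : HasDerivAt (fun s => C1 * Real.exp s / (1 + C1 * (Real.exp s - 1)))
      ((C1 * Real.exp t * (1 + C1 * (Real.exp t - 1)) - C1 * Real.exp t * (C1 * Real.exp t))
        / (1 + C1 * (Real.exp t - 1)) ^ 2) t :=
    ((Real.hasDerivAt_exp t).const_mul C1).div hgd hg.ne'
  -- time derivative of u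
  have hut : HasDerivAt (fun s => C2 * Real.exp s * (1 + C1 * (Real.exp s - 1)) ^ r * f s x)
      ((C2 * Real.exp t * ((1 + C1 * (Real.exp t - 1)) ^ r)
        + C2 * Real.exp t * (C1 * Real.exp t * r * (1 + C1 * (Real.exp t - 1)) ^ (r - 1))) * f t x
        + C2 * Real.exp t * (1 + C1 * (Real.exp t - 1)) ^ r * deriv (fun s => f s x) t) t :=
    (h1.mul hgr).mul hft
  have hequ : (fun s => u s x)
      = fun s => C2 * Real.exp s * (1 + C1 * (Real.exp s - 1)) ^ r * f s x :=
    funext fun s => hu s x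
  -- time derivative of v
  have hvt : HasDerivAt (fun s => (1 + a1) / (1 + a1 * a4)
        * (C1 * Real.exp s / (1 + C1 * (Real.exp s - 1)))
        - C2 * Real.exp s * (1 + C1 * (Real.exp s - 1)) ^ r * f s x)
      ((1 + a1) / (1 + a1 * a4)
        * ((C1 * Real.exp t * (1 + C1 * (Real.exp t - 1)) - C1 * Real.exp t * (C1 * Real.exp t))
          / (1 + C1 * (Real.exp t - 1)) ^ 2)
        - ((C2 * Real.exp t * ((1 + C1 * (Real.exp t - 1)) ^ r)
          + C2 * Real.exp t * (C1 * Real.exp t * r * (1 + C1 * (Real.exp t - 1)) ^ (r - 1))) * f t x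
          + C2 * Real.exp t * (1 + C1 * (Real.exp t - 1)) ^ r * deriv (fun s => f s x) t)) t :=
    (hP.const_mul _).sub hut
  have heqv : (fun s => v s x)
      = fun s => (1 + a1) / (1 + a1 * a4) * (C1 * Real.exp s / (1 + C1 * (Real.exp s - 1)))
        - C2 * Real.exp s * (1 + C1 * (Real.exp s - 1)) ^ r * f s x :=
    funext fun s => by rw [hv s x, hu s x]
  -- time derivative of w
  have hwt : HasDerivAt (fun s => (1 - a4) / (1 + a1 * a4)
        * (C1 * Real.exp s / (1 + C1 * (Real.exp s - 1))))
      ((1 - a4) / (1 + a1 * a4)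
        * ((C1 * Real.exp t * (1 + C1 * (Real.exp t - 1)) - C1 * Real.exp t * (C1 * Real.exp t))
          / (1 + C1 * (Real.exp t - 1)) ^ 2)) t :=
    hP.const_mul _
  have heqw : (fun s => w s x)
      = fun s => (1 - a4) / (1 + a1 * a4) * (C1 * Real.exp s / (1 + C1 * (Real.exp s - 1))) :=
    funext fun s => hw s x
  -- second space derivatives
  have huxx : deriv (fun y => deriv (fun z => u t z) y) x
      = C2 * Real.exp t * (1 + C1 * (Real.exp t - 1)) ^ r * deriv (fun s => f s x) t := by
    have heq : (fun z => u t z)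
        = fun z => C2 * Real.exp t * (1 + C1 * (Real.exp t - 1)) ^ r * f t z :=
      funext fun z => hu t z
    rw [heq]
    have h2 : (fun y => deriv (fun z => C2 * Real.exp t * (1 + C1 * (Real.exp t - 1)) ^ r * f t z) y)
        = fun y => C2 * Real.exp t * (1 + C1 * (Real.exp t - 1)) ^ r * deriv (fun z => f t z) y :=
      funext fun y => deriv_const_mul_field _
    rw [h2, deriv_const_mul_field, ← hheat t x]
  have hvxx : deriv (fun y => deriv (fun z => v t z) y) x
      = -(C2 * Real.exp t * (1 + C1 * (Real.exp t - 1)) ^ r * deriv (fun s => f s x) t) := by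
    have heq : (fun z => v t z)
        = fun z => (1 + a1) / (1 + a1 * a4) * (C1 * Real.exp t / (1 + C1 * (Real.exp t - 1)))
          - C2 * Real.exp t * (1 + C1 * (Real.exp t - 1)) ^ r * f t z :=
      funext fun z => by rw [hv t z, hu t z]
    rw [heq]
    have h2 : (fun y => deriv (fun z =>
          (1 + a1) / (1 + a1 * a4) * (C1 * Real.exp t / (1 + C1 * (Real.exp t - 1)))
          - C2 * Real.exp t * (1 + C1 * (Real.exp t - 1)) ^ r * f t z) y)
        = fun y => -(C2 * Real.exp t * (1 + C1 * (Real.exp t - 1)) ^ r * deriv (fun z => f t z) y) := by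
      funext y
      rw [deriv_const_sub, deriv_const_mul_field]
    rw [h2, deriv.fun_neg, deriv_const_mul_field, ← hheat t x]
  have hwxx : deriv (fun y => deriv (fun z => w t z) y) x = 0 := by
    have heq : (fun z => w t z)
        = fun _ => (1 - a4) / (1 + a1 * a4) * (C1 * Real.exp t / (1 + C1 * (Real.exp t - 1))) :=
      funext fun z => hw t z
    rw [heq]
    simp
  -- rpow arithmetic
  have hpow : (1 + C1 * (Real.exp t - 1)) ^ (r - 1)
      = (1 + C1 * (Real.exp t - 1)) ^ r / (1 + C1 * (Real.exp t - 1)) := by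
    rw [Real.rpow_sub hg, Real.rpow_one]
  refine ⟨?_, ?_, ?_⟩
  · rw [hequ, hut.deriv, huxx, hv t x, hu t x, hpow, hr]
    field_simp
    ring
  · rw [heqv, hvt.deriv, hvxx, hv t x, hu t x, hw t x, hpow, hr]
    field_simp
    ring
  · rw [heqw, hwt.deriv, hwxx, hv t x, hu t x, hw t x, hr]
    field_simp
    ring
end

section
/- Exact solution family (3-34): let d3, a1 > 0, a4 > 0, C1, C2 be real constants with a3 = a4 − a1 − 1, let f : ℝ × ℝ → ℝ be a smooth solution of the heat equation f_t = f_xx, and suppose 1 + C1·(e^{(1+a1)t} − 1) > 0 for all t in an open interval I. Define, for t ∈ I and x ∈ ℝ: u(t,x) = C2·e^t·(1 + C1(e^{(1+a1)t} − 1))^{−1/(1+a1)}·f(t,x), v(t,x) = C1·e^{(1+a1)t}/(1 + C1(e^{(1+a1)t} − 1)) − u(t,x), w(t,x) = (1 − C1)/(1 + C1(e^{(1+a1)t} − 1)). Then (u, v, w) satisfies the HGF system (3-21) with a3 = a4 − a1 − 1 at every point (t,x) ∈ I × ℝ. -/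
/-- Exact solution family (3-34) of the HGF system (3-21) with a3 = a4 − a1 − 1. -/
theorem hgf_exact_solution_family_3_34
    (d3 a1 a4 C1 C2 a3 : ℝ) (ha1 : 0 < a1) (ha4 : 0 < a4) (ha3 : a3 = a4 - a1 - 1)
    (f : ℝ → ℝ → ℝ)
    (hf : ContDiff ℝ (⊤ : ℕ∞) (Function.uncurry f))
    (hheat : ∀ t x : ℝ, deriv (fun s => f s x) t = deriv (fun y => deriv (fun z => f t z) y) x)
    (a b : ℝ) (I : Set ℝ) (hI : I = Set.Ioo a b)
    (hden : ∀ t ∈ I, 0 < 1 + C1 * (Real.exp ((1 + a1) * t) - 1))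
    (u v w : ℝ → ℝ → ℝ)
    (hu : ∀ t x : ℝ, u t x = C2 * Real.exp t
        * (1 + C1 * (Real.exp ((1 + a1) * t) - 1)) ^ (-1 / (1 + a1)) * f t x)
    (hv : ∀ t x : ℝ, v t x = C1 * Real.exp ((1 + a1) * t)
        / (1 + C1 * (Real.exp ((1 + a1) * t) - 1)) - u t x)
    (hw : ∀ t x : ℝ, w t x = (1 - C1) / (1 + C1 * (Real.exp ((1 + a1) * t) - 1))) :
    ∀ t ∈ I, ∀ x : ℝ,
      deriv (fun s => u s x) t
        = deriv (fun y => deriv (fun z => u t z) y) x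
          + u t x * (1 - u t x - v t x) ∧
      deriv (fun s => v s x) t
        = deriv (fun y => deriv (fun z => v t z) y) x
          + v t x * (1 - u t x - v t x) + a1 * (u t x + v t x) * w t x ∧
      deriv (fun s => w s x) t
        = d3 * deriv (fun y => deriv (fun z => w t z) y) x
          + a3 * (w t x * (1 - w t x)) - a4 * (u t x + v t x) * w t x := by
  intro t ht x
  have hDpos : 0 < 1 + C1 * (Real.exp ((1 + a1) * t) - 1) := hden t ht
  have hDne : 1 + C1 * (Real.exp ((1 + a1) * t) - 1) ≠ 0 := ne_of_gt hDpos
  have ha : (0:ℝ) < 1 + a1 := by linarith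
  have ha' : (1 + a1) ≠ 0 := ne_of_gt ha
  -- smoothness of slices
  have hslT : ContDiff ℝ (⊤ : ℕ∞) (fun s : ℝ => f s x) := by
    have h1 : ContDiff ℝ (⊤ : ℕ∞) (fun s : ℝ => (s, x)) := contDiff_id.prodMk contDiff_const
    have := hf.comp h1
    exact this
  have hslX : ContDiff ℝ (⊤ : ℕ∞) (fun z : ℝ => f t z) := by
    have h1 : ContDiff ℝ (⊤ : ℕ∞) (fun z : ℝ => (t, z)) := contDiff_const.prodMk contDiff_id
    have := hf.comp h1
    exact this
  have hdX : Differentiable ℝ (fun z : ℝ => f t z) := hslX.differentiable (by simp)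
  have hdX2 : Differentiable ℝ (deriv (fun z : ℝ => f t z)) :=
    ((contDiff_infty_iff_deriv.mp (hslX.of_le (by simp))).2).differentiable
      (by simp)
  have hft : HasDerivAt (fun s : ℝ => f s x) (deriv (fun s : ℝ => f s x) t) t :=
    ((hslT.differentiable (by simp)) t).hasDerivAt
  -- time derivative building blocks
  have hex : HasDerivAt (fun s : ℝ => Real.exp ((1 + a1) * s))
      (Real.exp ((1 + a1) * t) * (1 + a1)) t := by
    simpa using ((hasDerivAt_id t).const_mul (1 + a1)).exp
  have hD' : HasDerivAt (fun s : ℝ => 1 + C1 * (Real.exp ((1 + a1) * s) - 1))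
      (C1 * (Real.exp ((1 + a1) * t) * (1 + a1))) t :=
    ((hex.sub_const 1).const_mul C1).const_add 1
  have hDq : HasDerivAt
      (fun s : ℝ => (1 + C1 * (Real.exp ((1 + a1) * s) - 1)) ^ (-1 / (1 + a1)))
      (C1 * (Real.exp ((1 + a1) * t) * (1 + a1)) * (-1 / (1 + a1))
        * (1 + C1 * (Real.exp ((1 + a1) * t) - 1)) ^ (-1 / (1 + a1) - 1)) t :=
    hD'.rpow_const (Or.inl hDne)
  have hg := ((Real.hasDerivAt_exp t).const_mul C2).mul hDq
  -- time derivative of u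
  have hut : deriv (fun s => u s x) t
      = (C2 * Real.exp t * ((1 + C1 * (Real.exp ((1 + a1) * t) - 1)) ^ (-1 / (1 + a1)))
          + C2 * Real.exp t * (C1 * (Real.exp ((1 + a1) * t) * (1 + a1)) * (-1 / (1 + a1))
            * (1 + C1 * (Real.exp ((1 + a1) * t) - 1)) ^ (-1 / (1 + a1) - 1))) * f t x
        + C2 * Real.exp t * (1 + C1 * (Real.exp ((1 + a1) * t) - 1)) ^ (-1 / (1 + a1))
          * deriv (fun s => f s x) t := by
    have he : (fun s => u s x) = fun s =>
        C2 * Real.exp s * (1 + C1 * (Real.exp ((1 + a1) * s) - 1)) ^ (-1 / (1 + a1)) * f s x :=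
      funext fun s => hu s x
    rw [he]
    exact (hg.mul hft).deriv
  -- second space derivative of u
  have hufun : (fun z => u t z) = fun z =>
      C2 * Real.exp t * (1 + C1 * (Real.exp ((1 + a1) * t) - 1)) ^ (-1 / (1 + a1)) * f t z :=
    funext fun z => hu t z
  have huxx : deriv (fun y => deriv (fun z => u t z) y) x
      = C2 * Real.exp t * (1 + C1 * (Real.exp ((1 + a1) * t) - 1)) ^ (-1 / (1 + a1))
        * deriv (fun s => f s x) t := by
    rw [hufun]
    have h1 : (fun y => deriv (fun z =>
        C2 * Real.exp t * (1 + C1 * (Real.exp ((1 + a1) * t) - 1)) ^ (-1 / (1 + a1)) * f t z) y)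
        = fun y => C2 * Real.exp t * (1 + C1 * (Real.exp ((1 + a1) * t) - 1)) ^ (-1 / (1 + a1))
          * deriv (fun z => f t z) y :=
      funext fun y => deriv_const_mul _ (hdX y)
    rw [h1, deriv_const_mul _ (hdX2 x), ← hheat t x]
  -- time derivative of v
  have hS : HasDerivAt (fun s : ℝ =>
      C1 * Real.exp ((1 + a1) * s) / (1 + C1 * (Real.exp ((1 + a1) * s) - 1)))
      ((C1 * (Real.exp ((1 + a1) * t) * (1 + a1)) * (1 + C1 * (Real.exp ((1 + a1) * t) - 1))
        - C1 * Real.exp ((1 + a1) * t) * (C1 * (Real.exp ((1 + a1) * t) * (1 + a1))))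
        / (1 + C1 * (Real.exp ((1 + a1) * t) - 1)) ^ 2) t :=
    (hex.const_mul C1).div hD' hDne
  have hvt : deriv (fun s => v s x) t
      = (C1 * (Real.exp ((1 + a1) * t) * (1 + a1)) * (1 + C1 * (Real.exp ((1 + a1) * t) - 1))
        - C1 * Real.exp ((1 + a1) * t) * (C1 * (Real.exp ((1 + a1) * t) * (1 + a1))))
        / (1 + C1 * (Real.exp ((1 + a1) * t) - 1)) ^ 2
        - ((C2 * Real.exp t * ((1 + C1 * (Real.exp ((1 + a1) * t) - 1)) ^ (-1 / (1 + a1)))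
          + C2 * Real.exp t * (C1 * (Real.exp ((1 + a1) * t) * (1 + a1)) * (-1 / (1 + a1))
            * (1 + C1 * (Real.exp ((1 + a1) * t) - 1)) ^ (-1 / (1 + a1) - 1))) * f t x
        + C2 * Real.exp t * (1 + C1 * (Real.exp ((1 + a1) * t) - 1)) ^ (-1 / (1 + a1))
          * deriv (fun s => f s x) t) := by
    have he : (fun s => v s x) = fun s =>
        C1 * Real.exp ((1 + a1) * s) / (1 + C1 * (Real.exp ((1 + a1) * s) - 1))
        - C2 * Real.exp s * (1 + C1 * (Real.exp ((1 + a1) * s) - 1)) ^ (-1 / (1 + a1)) * f s x :=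
      funext fun s => by rw [hv s x, hu s x]
    rw [he]
    exact (hS.sub (hg.mul hft)).deriv
  -- second space derivative of v
  have hvfun : (fun z => v t z) = fun z =>
      C1 * Real.exp ((1 + a1) * t) / (1 + C1 * (Real.exp ((1 + a1) * t) - 1))
      - C2 * Real.exp t * (1 + C1 * (Real.exp ((1 + a1) * t) - 1)) ^ (-1 / (1 + a1)) * f t z :=
    funext fun z => by rw [hv t z, hu t z]
  have hvxx : deriv (fun y => deriv (fun z => v t z) y) x
      = -(C2 * Real.exp t * (1 + C1 * (Real.exp ((1 + a1) * t) - 1)) ^ (-1 / (1 + a1))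
        * deriv (fun s => f s x) t) := by
    rw [hvfun]
    have h1 : (fun y => deriv (fun z =>
        C1 * Real.exp ((1 + a1) * t) / (1 + C1 * (Real.exp ((1 + a1) * t) - 1))
        - C2 * Real.exp t * (1 + C1 * (Real.exp ((1 + a1) * t) - 1)) ^ (-1 / (1 + a1)) * f t z) y)
        = fun y => -(C2 * Real.exp t
            * (1 + C1 * (Real.exp ((1 + a1) * t) - 1)) ^ (-1 / (1 + a1))
            * deriv (fun z => f t z) y) :=
      funext fun y => (((hdX y).hasDerivAt.const_mul
        (C2 * Real.exp t * (1 + C1 * (Real.exp ((1 + a1) * t) - 1)) ^ (-1 / (1 + a1)))).const_sub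
        (C1 * Real.exp ((1 + a1) * t) / (1 + C1 * (Real.exp ((1 + a1) * t) - 1)))).deriv
    rw [h1, deriv.fun_neg, deriv_const_mul _ (hdX2 x), ← hheat t x]
  -- time derivative of w
  have hwt : deriv (fun s => w s x) t
      = (0 * (1 + C1 * (Real.exp ((1 + a1) * t) - 1))
          - (1 - C1) * (C1 * (Real.exp ((1 + a1) * t) * (1 + a1))))
        / (1 + C1 * (Real.exp ((1 + a1) * t) - 1)) ^ 2 := by
    have he : (fun s => w s x) = fun s =>
        (1 - C1) / (1 + C1 * (Real.exp ((1 + a1) * s) - 1)) :=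
      funext fun s => hw s x
    rw [he]
    exact ((hasDerivAt_const t (1 - C1)).div hD' hDne).deriv
  -- second space derivative of w
  have hwxx : deriv (fun y => deriv (fun z => w t z) y) x = 0 := by
    have he : (fun z => w t z) = fun _ =>
        (1 - C1) / (1 + C1 * (Real.exp ((1 + a1) * t) - 1)) :=
      funext fun z => hw t z
    rw [he]
    simp
  have hsub : (1 + C1 * (Real.exp ((1 + a1) * t) - 1)) ^ (-1 / (1 + a1) - 1)
      = (1 + C1 * (Real.exp ((1 + a1) * t) - 1)) ^ (-1 / (1 + a1))
        / (1 + C1 * (Real.exp ((1 + a1) * t) - 1)) := by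
    rw [Real.rpow_sub hDpos, Real.rpow_one]
  refine ⟨?_, ?_, ?_⟩
  · rw [hut, huxx, hsub, hv t x, hu t x]
    field_simp
    ring
  · rw [hvt, hvxx, hsub, hv t x, hu t x, hw t x]
    field_simp
    ring
  · rw [hwt, hwxx, hv t x, hu t x, hw t x, ha3]
    field_simp
    ring
end

section
/- Nonlocal substitution linearizing equation (a-23): let d1, d3 be real constants with d1 ≠ d3, and let g : ℝ → ℝ be a three times differentiable function which is nonvanishing on ℝ and satisfies the linear third-order ODE (d1 − d3)·g''' + g' = 0. Then the function f1 = g'/g satisfies the nonlinear second-order ODE f1'' + 3·f1·f1' + f1³ + f1/(d1 − d3) = 0 on ℝ. -/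
/-- The nonlocal substitution f1 = g'/g linearizes equation (a-23):
if (d1 − d3)·g''' + g' = 0 with g nonvanishing, then
f1'' + 3·f1·f1' + f1³ + f1/(d1 − d3) = 0. -/
theorem nonlocal_substitution_linearizes_a23
    (d1 d3 : ℝ) (hd13 : d1 ≠ d3)
    (g : ℝ → ℝ)
    (hg1 : Differentiable ℝ g)
    (hg2 : Differentiable ℝ (deriv g))
    (hg3 : Differentiable ℝ (deriv (deriv g)))
    (hgne : ∀ t : ℝ, g t ≠ 0)
    (hODE : ∀ t : ℝ, (d1 - d3) * deriv (deriv (deriv g)) t + deriv g t = 0)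
    (f1 : ℝ → ℝ)
    (hf1 : ∀ t : ℝ, f1 t = deriv g t / g t) :
    ∀ t : ℝ,
      deriv (deriv f1) t + 3 * f1 t * deriv f1 t + (f1 t) ^ 3 + f1 t / (d1 - d3) = 0 := by
  have hd : d1 - d3 ≠ 0 := sub_ne_zero.mpr hd13
  have hf1e : f1 = fun t => deriv g t / g t := funext hf1
  have H1 : ∀ t : ℝ, HasDerivAt g (deriv g t) t :=
    fun t => (hg1 t).hasDerivAt
  have H2 : ∀ t : ℝ, HasDerivAt (deriv g) (deriv (deriv g) t) t :=
    fun t => (hg2 t).hasDerivAt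
  have H3 : ∀ t : ℝ, HasDerivAt (deriv (deriv g)) (deriv (deriv (deriv g)) t) t :=
    fun t => (hg3 t).hasDerivAt
  have hder1 : ∀ t, HasDerivAt f1
      ((deriv (deriv g) t * g t - deriv g t * deriv g t) / (g t) ^ 2) t := by
    intro t
    rw [hf1e]
    exact (H2 t).div (H1 t) (hgne t)
  have hder1e : deriv f1 = fun t =>
      (deriv (deriv g) t * g t - deriv g t * deriv g t) / (g t) ^ 2 :=
    funext fun t => (hder1 t).deriv
  have hder2 : ∀ t, HasDerivAt (deriv f1)
      (((deriv (deriv (deriv g)) t * g t + deriv (deriv g) t * deriv g t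
        - (deriv (deriv g) t * deriv g t + deriv g t * deriv (deriv g) t)) * (g t) ^ 2
       - (deriv (deriv g) t * g t - deriv g t * deriv g t)
          * (2 * (g t) ^ 1 * deriv g t)) / ((g t) ^ 2) ^ 2) t := by
    intro t
    rw [hder1e]
    exact (((H3 t).mul (H1 t)).sub ((H2 t).mul (H2 t))).div
      ((H1 t).pow 2) (pow_ne_zero 2 (hgne t))
  intro t
  have hODE' : deriv (deriv (deriv g)) t = -(deriv g t) / (d1 - d3) := by
    have := hODE t
    field_simp
    linarith
  rw [(hder2 t).deriv, (hder1 t).deriv, hf1 t, hODE']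
  have hg0 := hgne t
  field_simp
  ring
end
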